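/- arXiv:1510.04524 — 14 statements merged into one kernel-verified Lean document; each statement's English description precedes it below -/
import Mathlib

section
/- Let α, λ, c₁, p'₁, p''₁, q₀, q₁ be real numbers with α ≥ 0, λ ≥ 0, c₁ > λ/(1 + α·λ), q₀ ≥ 0, q₁ ≥ 0 and q₀ + α·q₁ > 0. If q₁ = min(p''₁, max(c₁·(q₀ + α·q₁), p'₁)) and q₁ ≤ λ·q₀, then q₁ = p''₁. (Pointwise Case 1 claim in the proof of Theorem 4 for the least favorable density under the alternative on the acceptance region.) -/
/-! If the fixed point were not capped at `p''₁`, it would dominate `c₁ · (q₀ + α q₁)`.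
But `q₁ ≤ λ q₀` gives `(1 + αλ) q₁ ≤ λ (q₀ + α q₁)`, and `c₁ (1 + αλ) > λ` then forces
`q₁ < c₁ (q₀ + α q₁)`. -/

theorem eq_of_eq_min_max_of_lt {L : Type*} [LinearOrder L] {x a b d : L}
    (hx : x = min a (max b d)) (hlt : x < b) : x = a := by
  rcases le_total a (max b d) with h | h
  · rwa [min_eq_left h] at hx
  · rw [min_eq_right h] at hx
    exact absurd (hx ▸ le_max_left b d) hlt.not_ge

theorem lt_mul_add_mul_of_le_mul {α lam c q₀ q₁ : ℝ} (hd : 0 < 1 + α * lam)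
    (hc : lam / (1 + α * lam) < c) (hpos : 0 < q₀ + α * q₁) (hle : q₁ ≤ lam * q₀) :
    q₁ < c * (q₀ + α * q₁) := by
  have hc' : lam < c * (1 + α * lam) := (div_lt_iff₀ hd).mp hc
  refine lt_of_mul_lt_mul_left ?_ hd.le
  calc (1 + α * lam) * q₁ ≤ lam * (q₀ + α * q₁) := by linear_combination hle
    _ < c * (1 + α * lam) * (q₀ + α * q₁) := mul_lt_mul_of_pos_right hc' hpos
    _ = (1 + α * lam) * (c * (q₀ + α * q₁)) := by ring

theorem band_case1_alt_general (α lam c₁ p'₁ p''₁ q₀ q₁ : ℝ)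
    (hα : 0 ≤ α) (hlam : 0 ≤ lam)
    (hc₁ : c₁ > lam / (1 + α * lam))
    (hpos : 0 < q₀ + α * q₁)
    (hfix : q₁ = min p''₁ (max (c₁ * (q₀ + α * q₁)) p'₁))
    (hle : q₁ ≤ lam * q₀) :
    q₁ = p''₁ :=
  eq_of_eq_min_max_of_lt hfix
    (lt_mul_add_mul_of_le_mul (by positivity) hc₁ hpos hle)

/-- Pointwise Case 1 claim in the proof of Theorem 4 for the least favorable density
under the alternative on the acceptance region. -/
theorem band_case1_alt (α lam c₁ p'₁ p''₁ q₀ q₁ : ℝ)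
    (hα : 0 ≤ α) (hlam : 0 ≤ lam)
    (hc₁ : c₁ > lam / (1 + α * lam)) (hq₀ : 0 ≤ q₀) (hq₁ : 0 ≤ q₁)
    (hpos : 0 < q₀ + α * q₁)
    (hfix : q₁ = min p''₁ (max (c₁ * (q₀ + α * q₁)) p'₁))
    (hle : q₁ ≤ lam * q₀) :
    q₁ = p''₁ :=
  band_case1_alt_general α lam c₁ p'₁ p''₁ q₀ q₁ hα hlam hc₁ hpos hfix hle
end

section
/- Let α, λ, c₁, p'₁, p''₁, q₀, q₁ be real numbers with α ≥ 0, λ ≥ 0, 0 ≤ c₁ ≤ λ/(1 + α·λ), 0 ≤ p'₁ ≤ p''₁, q₀ ≥ 0 and q₁ ≥ 0. If q₁ = min(p''₁, max(c₁·(q₀ + α·q₁), p'₁)) and q₁ > λ·q₀, then q₁ = p'₁. (Pointwise Case 2 claim in the proof of Theorem 4: on the rejection region the least favorable alternative density equals its lower band boundary.) -/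
/-! Multiplying by `1 + α λ > 0`, the bound on `c₁` and `λ q₀ < q₁` give `c₁ (q₀ + α q₁) < q₁`.
So in `q₁ = min p''₁ (max (c₁ (q₀ + α q₁)) p'₁)` the maximum cannot be attained by the linear
term (that would force `q₁ ≤ c₁ (q₀ + α q₁)`); it is `p'₁`, which the minimum leaves unchanged. -/

theorem eq_of_eq_min_max_of_lt_s3 {X : Type*} [LinearOrder X] {a l u q : X} (hlu : l ≤ u)
    (hfix : q = min u (max a l)) (ha : a < q) : q = l := by
  have hq_le : q ≤ max a l := hfix ▸ min_le_right u (max a l)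
  exact le_antisymm ((le_max_iff.1 hq_le).resolve_left ha.not_ge)
    (hfix ▸ le_min hlu (le_max_right a l))

theorem mul_add_mul_lt_of_le_div_one_add_mul {α lam c q₀ q₁ : ℝ} (hα : 0 ≤ α) (hlam : 0 ≤ lam)
    (hc : c ≤ lam / (1 + α * lam)) (hq₀ : 0 ≤ q₀) (hgt : lam * q₀ < q₁) :
    c * (q₀ + α * q₁) < q₁ := by
  have hden : 0 < 1 + α * lam := by positivity
  have hq₁ : 0 ≤ q₁ := (mul_nonneg hlam hq₀).trans hgt.le
  have hc' : c * (1 + α * lam) ≤ lam := (le_div_iff₀ hden).1 hc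
  refine lt_of_mul_lt_mul_right ?_ hden.le
  calc c * (q₀ + α * q₁) * (1 + α * lam) = c * (1 + α * lam) * (q₀ + α * q₁) := by ring
    _ ≤ lam * (q₀ + α * q₁) := mul_le_mul_of_nonneg_right hc' (by positivity)
    _ = lam * q₀ + α * lam * q₁ := by ring
    _ < q₁ + α * lam * q₁ := add_lt_add_left hgt _
    _ = q₁ * (1 + α * lam) := by ring

theorem band_case2_alt_general (α lam c₁ p'₁ p''₁ q₀ q₁ : ℝ)
    (hα : 0 ≤ α) (hlam : 0 ≤ lam)
    (hc₁' : c₁ ≤ lam / (1 + α * lam))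
    (hband : p'₁ ≤ p''₁) (hq₀ : 0 ≤ q₀)
    (hfix : q₁ = min p''₁ (max (c₁ * (q₀ + α * q₁)) p'₁))
    (hgt : q₁ > lam * q₀) :
    q₁ = p'₁ :=
  eq_of_eq_min_max_of_lt_s3 hband hfix (mul_add_mul_lt_of_le_div_one_add_mul hα hlam hc₁' hq₀ hgt)

/-- Pointwise Case 2 claim in the proof of Theorem 4: on the rejection region the
least favorable alternative density equals its lower band boundary. -/
theorem band_case2_alt (α lam c₁ p'₁ p''₁ q₀ q₁ : ℝ)
    (hα : 0 ≤ α) (hlam : 0 ≤ lam)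
    (hc₁ : 0 ≤ c₁) (hc₁' : c₁ ≤ lam / (1 + α * lam))
    (hp'₁ : 0 ≤ p'₁) (hband : p'₁ ≤ p''₁) (hq₀ : 0 ≤ q₀) (hq₁ : 0 ≤ q₁)
    (hfix : q₁ = min p''₁ (max (c₁ * (q₀ + α * q₁)) p'₁))
    (hgt : q₁ > lam * q₀) :
    q₁ = p'₁ :=
  band_case2_alt_general α lam c₁ p'₁ p''₁ q₀ q₁ hα hlam hc₁' hband hq₀ hfix hgt
end

section
/- Let α, λ, c₀, c₁, p'₀, p''₀, p'₁, p''₁, q₀, q₁ be real numbers with α ≥ 0, λ ≥ 0, α + λ > 0, c₀ ≥ 1/(α + λ), c₁ > λ/(1 + α·λ), 0 ≤ p'₀ ≤ p''₀, 0 ≤ p'₁ ≤ p''₁, q₀ ≥ 0, q₁ ≥ 0 and q₀ + q₁ > 0. If q₀ = min(p''₀, max(c₀·(α·q₀ + q₁), p'₀)) and q₁ = min(p''₁, max(c₁·(q₀ + α·q₁), p'₁)), then min(q₁, λ·q₀) = min(p''₁, λ·p''₀). (Combined pointwise identity of Case 1 in the proof of Theorem 4: in the clipping regime the least favorable pair attains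 the upper band boundaries in the objective.) -/
/-!
A coordinate strictly below its upper boundary lies at or above its linear term. Through the
bounds on `c₀` and `c₁` this gives `q₁ ≤ λ q₀` when `q₀ < p''₀`, and `λ q₀ < q₁` when
`q₁ < p''₁` and `q₀ > 0`. Hence at most one coordinate is strictly below its upper boundary
(both at once would force `q₀ = 0`, hence `q₁ = 0`), and in either one-sided case the minimum
is the term of the coordinate sitting at its upper boundary.
-/

theorem le_of_eq_min_max_of_lt {α : Type*} [LinearOrder α] {q u v l : α}
    (h : q = min u (max v l)) (hq : q < u) : v ≤ q := by
  by_contra! hv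
  exact (lt_min hq (hv.trans_le (le_max_left v l))).ne h

theorem mul_le_mul_of_div_le_of_mul_le {a b c s q : ℝ} (hb : 0 < b) (hc : a / b ≤ c)
    (hs : 0 ≤ s) (h : c * s ≤ q) : a * s ≤ b * q :=
  calc a * s = b * (a / b * s) := by field_simp
    _ ≤ b * (c * s) := by gcongr
    _ ≤ b * q := by gcongr

theorem mul_lt_mul_of_div_lt_of_mul_le {a b c s q : ℝ} (hb : 0 < b) (hc : a / b < c)
    (hs : 0 < s) (h : c * s ≤ q) : a * s < b * q :=
  calc a * s = b * (a / b * s) := by field_simp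
    _ < b * (c * s) := by gcongr
    _ ≤ b * q := by gcongr

theorem band_case1_combined_general (α lam c₀ c₁ p'₀ p''₀ p'₁ p''₁ q₀ q₁ : ℝ)
    (hα : 0 ≤ α) (hlam : 0 ≤ lam) (hαlam : 0 < α + lam)
    (hc₀ : c₀ ≥ 1 / (α + lam)) (hc₁ : c₁ > lam / (1 + α * lam))
    (hq₀ : 0 ≤ q₀) (hq₁ : 0 ≤ q₁) (hpos : 0 < q₀ + q₁)
    (hfix₀ : q₀ = min p''₀ (max (c₀ * (α * q₀ + q₁)) p'₀))
    (hfix₁ : q₁ = min p''₁ (max (c₁ * (q₀ + α * q₁)) p'₁)) :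
    min q₁ (lam * q₀) = min p''₁ (lam * p''₀) := by
  have hq₀le : q₀ ≤ p''₀ := hfix₀ ▸ min_le_left _ _
  have hq₁le : q₁ ≤ p''₁ := hfix₁ ▸ min_le_left _ _
  have row₀ (h : q₀ < p''₀) : q₁ ≤ lam * q₀ := by
    have := mul_le_mul_of_div_le_of_mul_le hαlam hc₀ (by positivity)
      (le_of_eq_min_max_of_lt hfix₀ h)
    linarith
  have row₁ (h : q₁ < p''₁) : lam * q₀ < q₁ ∨ q₀ = 0 := by
    rcases hq₀.eq_or_lt with h₀ | h₀
    · exact .inr h₀.symm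
    · have := mul_lt_mul_of_div_lt_of_mul_le (by positivity) hc₁ (by positivity)
        (le_of_eq_min_max_of_lt hfix₁ h)
      exact .inl (by linarith)
  rcases hq₀le.lt_or_eq with h₀ | h₀ <;> rcases hq₁le.lt_or_eq with h₁ | h₁
  · exfalso
    have hle := row₀ h₀
    rcases row₁ h₁ with hlt | hzero
    · linarith
    · rw [hzero, mul_zero] at hle
      linarith
  · have hle := row₀ h₀
    rw [← h₁, min_eq_left hle, min_eq_left (hle.trans (mul_le_mul_of_nonneg_left hq₀le hlam))]
  · have hle : lam * q₀ ≤ q₁ := (row₁ h₁).elim le_of_lt fun h => by simp [h, hq₁]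
    rw [← h₀, min_eq_right hle, min_eq_right (hle.trans h₁.le)]
  · rw [h₀, h₁]

/-- Combined pointwise identity of Case 1 in the proof of Theorem 4: in the clipping
regime the least favorable pair attains the upper band boundaries in the objective. -/
theorem band_case1_combined (α lam c₀ c₁ p'₀ p''₀ p'₁ p''₁ q₀ q₁ : ℝ)
    (hα : 0 ≤ α) (hlam : 0 ≤ lam) (hαlam : 0 < α + lam)
    (hc₀ : c₀ ≥ 1 / (α + lam)) (hc₁ : c₁ > lam / (1 + α * lam))
    (hp'₀ : 0 ≤ p'₀) (hband₀ : p'₀ ≤ p''₀)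
    (hp'₁ : 0 ≤ p'₁) (hband₁ : p'₁ ≤ p''₁)
    (hq₀ : 0 ≤ q₀) (hq₁ : 0 ≤ q₁) (hpos : 0 < q₀ + q₁)
    (hfix₀ : q₀ = min p''₀ (max (c₀ * (α * q₀ + q₁)) p'₀))
    (hfix₁ : q₁ = min p''₁ (max (c₁ * (q₀ + α * q₁)) p'₁)) :
    min q₁ (lam * q₀) = min p''₁ (lam * p''₀) :=
  band_case1_combined_general α lam c₀ c₁ p'₀ p''₀ p'₁ p''₁ q₀ q₁ hα hlam hαlam hc₀ hc₁ hq₀ hq₁ hpos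
    hfix₀ hfix₁
end

section
/- Let (Ω, 𝔉, μ) be a σ-finite measure space, let p'₀, p''₀, p'₁, p''₁ : Ω → ℝ be measurable with 0 ≤ p'ᵢ ≤ p''ᵢ pointwise and p'₀, p'₁ integrable. Let α ≥ 0, λ ≥ 0 with α + λ > 0, and let 0 < c₀ < 1/(α + λ) and 0 < c₁ ≤ λ/(1 + α·λ). Suppose q₀, q₁ are μ-densities satisfying μ-a.e. q₀ = min(p''₀, max(c₀·(α·q₀ + q₁), p'₀)) and q₁ = min(p''₁, max(c₁·(q₀ + α·q₁), p'₁)). Then ∫ min(q₁, λ·q₀) dμ = ∫ min(p'₁, λ·p'₀) dμ + (1 − ∫ p'₁ dμ) + λ·(1 − ∫ p'₀ dμ). (Case 2 attainment identity in the proof of Theorem 4: the value of the objective at the least favorable pair equals the ε-contamination expression with contamination rates ε᷀ᵢ = 1 − ∫ p'ᵢ dμ.) -/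
/-!
At a fixed point of the clipped iteration, `max q₁ (lam * q₀) = max p'₁ (lam * p'₀)` pointwise.
Where `q₀` exceeds its lower bound `p'₀` it is at most `c₀ (α q₀ + q₁)`, and `c₀ (α + lam) < 1`
turns this into `lam * q₀ ≤ q₁`; where `q₁` exceeds `p'₁`, `c₁ (1 + α lam) ≤ lam` gives
`q₁ ≤ lam * q₀` in the same way; both at once force `q₀ = 0`. As `min + max` is the sum,
`min q₁ (lam q₀) = min p'₁ (lam p'₀) + (q₁ - p'₁) + lam (q₀ - p'₀)`, and `q₀`, `q₁` integrate to one.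
-/

open MeasureTheory

lemma mul_le_of_le_mul_add {α lam c a b : ℝ} (hα : 0 ≤ α) (hlam : 0 ≤ lam)
    (hc : c * (α + lam) < 1) (hb : 0 ≤ b) (h : a ≤ c * (α * a + b)) : lam * a ≤ b := by
  have hcα : c * α < 1 := by
    rcases le_or_gt 0 c with hc0 | hc0 <;> nlinarith
  have : (1 - c * α) * (lam * a) ≤ (1 - c * α) * b := by nlinarith
  exact le_of_mul_le_mul_left this (by linarith)

lemma le_mul_of_le_mul_add {α lam c a b : ℝ} (hα : 0 ≤ α) (hlam : 0 ≤ lam)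
    (hc : c * (1 + α * lam) ≤ lam) (ha : 0 ≤ a) (h : b ≤ c * (a + α * b)) : b ≤ lam * a := by
  have hcα : c * α < 1 := by
    rcases le_or_gt c 0 with hc0 | hc0 <;> nlinarith
  have : (1 - c * α) * b ≤ (1 - c * α) * (lam * a) := by nlinarith
  exact le_of_mul_le_mul_left this (by linarith)

lemma mul_lt_one_of_lt_one_div {c x : ℝ} (hx : 0 ≤ x) (hc : c < 1 / x) : c * x < 1 := by
  rcases hx.eq_or_lt with rfl | hx
  · simp
  · exact (lt_div_iff₀ hx).1 hc

lemma le_of_eq_min_max {lo hi x a : ℝ} (hle : lo ≤ hi) (ha : a = min hi (max x lo)) : lo ≤ a :=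
  ha ▸ le_min hle (le_max_right _ _)

lemma le_or_eq_of_eq_min_max {lo hi x a : ℝ} (hle : lo ≤ hi) (ha : a = min hi (max x lo)) :
    a ≤ x ∨ a = lo :=
  (le_max_iff.1 (ha ▸ min_le_right _ _)).imp_right fun h ↦ h.antisymm (le_of_eq_min_max hle ha)

lemma max_eq_max_of_eq_min_max {p₀ P₀ p₁ P₁ a b α lam c₀ c₁ : ℝ}
    (hp₀ : 0 ≤ p₀) (hp₀P₀ : p₀ ≤ P₀) (hp₁ : 0 ≤ p₁) (hp₁P₁ : p₁ ≤ P₁)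
    (hα : 0 ≤ α) (hlam : 0 ≤ lam)
    (hc₀ : c₀ * (α + lam) < 1) (hc₁ : c₁ * (1 + α * lam) ≤ lam)
    (ha : a = min P₀ (max (c₀ * (α * a + b)) p₀))
    (hb : b = min P₁ (max (c₁ * (a + α * b)) p₁)) :
    max b (lam * a) = max p₁ (lam * p₀) := by
  have hp₀a := le_of_eq_min_max hp₀P₀ ha
  have hp₁b := le_of_eq_min_max hp₁P₁ hb
  rcases le_or_eq_of_eq_min_max hp₀P₀ ha with ha' | rfl <;>
    rcases le_or_eq_of_eq_min_max hp₁P₁ hb with hb' | rfl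
  · -- `b = lam * a`, so `a ≤ c₀ (α + lam) a` forces `a = 0`
    have hab := mul_le_of_le_mul_add hα hlam hc₀ (hp₁.trans hp₁b) ha'
    have hba := le_mul_of_le_mul_add hα hlam hc₁ (hp₀.trans hp₀a) hb'
    rw [le_antisymm hba hab] at ha'
    have ha0 : a = 0 := by
      have : a * (1 - c₀ * (α + lam)) ≤ 0 := by linarith
      exact le_antisymm (nonpos_of_mul_nonpos_left this (by linarith)) (hp₀.trans hp₀a)
    subst ha0
    have hb0 : b = 0 := by linarith
    subst hb0
    rw [le_antisymm hp₀a hp₀, le_antisymm hp₁b hp₁]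
  · have hab := mul_le_of_le_mul_add hα hlam hc₀ (hp₁.trans hp₁b) ha'
    rw [max_eq_left hab, max_eq_left ((mul_le_mul_of_nonneg_left hp₀a hlam).trans hab)]
  · have hba := le_mul_of_le_mul_add hα hlam hc₁ (hp₀.trans hp₀a) hb'
    rw [max_eq_right hba, max_eq_right (hp₁b.trans hba)]
  · rfl

lemma min_eq_min_add_sub_add_sub_of_max_eq {G : Type*} [AddCommGroup G] [LinearOrder G]
    [IsOrderedAddMonoid G] {x y u v : G} (h : max x y = max u v) :
    min x y = min u v + (x - u) + (y - v) := by
  rw [eq_sub_of_add_eq (min_add_max x y), eq_sub_of_add_eq (min_add_max u v), h]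
  abel

theorem band_case2_attainment_general {Ω : Type*} [MeasurableSpace Ω] (μ : Measure Ω)
    (p'₀ p''₀ p'₁ p''₁ : Ω → ℝ)
    (h₀nonneg : ∀ ω, 0 ≤ p'₀ ω) (h₀le : ∀ ω, p'₀ ω ≤ p''₀ ω)
    (h₁nonneg : ∀ ω, 0 ≤ p'₁ ω) (h₁le : ∀ ω, p'₁ ω ≤ p''₁ ω)
    (hint'₀ : Integrable p'₀ μ) (hint'₁ : Integrable p'₁ μ)
    (α lam c₀ c₁ : ℝ)
    (hα : 0 ≤ α) (hlam : 0 ≤ lam)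
    (hc₀' : c₀ < 1 / (α + lam))
    (hc₁' : c₁ ≤ lam / (1 + α * lam))
    (q₀ q₁ : Ω → ℝ)
    (hq₀int : Integrable q₀ μ) (hq₀one : ∫ ω, q₀ ω ∂μ = 1)
    (hq₁int : Integrable q₁ μ) (hq₁one : ∫ ω, q₁ ω ∂μ = 1)
    (hfix₀ : ∀ᵐ ω ∂μ, q₀ ω = min (p''₀ ω) (max (c₀ * (α * q₀ ω + q₁ ω)) (p'₀ ω)))
    (hfix₁ : ∀ᵐ ω ∂μ, q₁ ω = min (p''₁ ω) (max (c₁ * (q₀ ω + α * q₁ ω)) (p'₁ ω))) :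
    ∫ ω, min (q₁ ω) (lam * q₀ ω) ∂μ
      = ∫ ω, min (p'₁ ω) (lam * p'₀ ω) ∂μ
        + (1 - ∫ ω, p'₁ ω ∂μ) + lam * (1 - ∫ ω, p'₀ ω ∂μ) := by
  have hc₀ := mul_lt_one_of_lt_one_div (add_nonneg hα hlam) hc₀'
  have hc₁ : c₁ * (1 + α * lam) ≤ lam := (le_div_iff₀ (by positivity)).1 hc₁'
  have hmin : ∀ᵐ ω ∂μ, min (q₁ ω) (lam * q₀ ω)
      = min (p'₁ ω) (lam * p'₀ ω) + (q₁ ω - p'₁ ω) + lam * (q₀ ω - p'₀ ω) := by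
    filter_upwards [hfix₀, hfix₁] with ω h₀ h₁
    rw [min_eq_min_add_sub_add_sub_of_max_eq (max_eq_max_of_eq_min_max (h₀nonneg ω) (h₀le ω)
      (h₁nonneg ω) (h₁le ω) hα hlam hc₀ hc₁ h₀ h₁), mul_sub]
  have hint_min : Integrable (fun ω ↦ min (p'₁ ω) (lam * p'₀ ω)) μ :=
    hint'₁.inf (hint'₀.const_mul lam)
  have hint₁ : Integrable (fun ω ↦ q₁ ω - p'₁ ω) μ := hq₁int.sub hint'₁
  have hint₀ : Integrable (fun ω ↦ lam * (q₀ ω - p'₀ ω)) μ := (hq₀int.sub hint'₀).const_mul lam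
  rw [integral_congr_ae hmin, integral_add (f := fun ω ↦ _ + _) (hint_min.add hint₁) hint₀,
    integral_add hint_min hint₁, integral_sub hq₁int hint'₁, integral_const_mul,
    integral_sub hq₀int hint'₀, hq₀one, hq₁one]

/-- Case 2 attainment identity in the proof of Theorem 4: the value of the objective
at the least favorable pair equals the ε-contamination expression with contamination
rates εᵢ = 1 − ∫ p'ᵢ dμ. -/
theorem band_case2_attainment {Ω : Type*} [MeasurableSpace Ω] (μ : Measure Ω) [SigmaFinite μ]
    (p'₀ p''₀ p'₁ p''₁ : Ω → ℝ)
    (hm'₀ : Measurable p'₀) (hm''₀ : Measurable p''₀)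
    (hm'₁ : Measurable p'₁) (hm''₁ : Measurable p''₁)
    (h₀nonneg : ∀ ω, 0 ≤ p'₀ ω) (h₀le : ∀ ω, p'₀ ω ≤ p''₀ ω)
    (h₁nonneg : ∀ ω, 0 ≤ p'₁ ω) (h₁le : ∀ ω, p'₁ ω ≤ p''₁ ω)
    (hint'₀ : Integrable p'₀ μ) (hint'₁ : Integrable p'₁ μ)
    (α lam c₀ c₁ : ℝ)
    (hα : 0 ≤ α) (hlam : 0 ≤ lam) (hαlam : 0 < α + lam)
    (hc₀ : 0 < c₀) (hc₀' : c₀ < 1 / (α + lam))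
    (hc₁ : 0 < c₁) (hc₁' : c₁ ≤ lam / (1 + α * lam))
    (q₀ q₁ : Ω → ℝ)
    (hq₀m : Measurable q₀) (hq₀nonneg : ∀ ω, 0 ≤ q₀ ω)
    (hq₀int : Integrable q₀ μ) (hq₀one : ∫ ω, q₀ ω ∂μ = 1)
    (hq₁m : Measurable q₁) (hq₁nonneg : ∀ ω, 0 ≤ q₁ ω)
    (hq₁int : Integrable q₁ μ) (hq₁one : ∫ ω, q₁ ω ∂μ = 1)
    (hfix₀ : ∀ᵐ ω ∂μ, q₀ ω = min (p''₀ ω) (max (c₀ * (α * q₀ ω + q₁ ω)) (p'₀ ω)))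
    (hfix₁ : ∀ᵐ ω ∂μ, q₁ ω = min (p''₁ ω) (max (c₁ * (q₀ ω + α * q₁ ω)) (p'₁ ω))) :
    ∫ ω, min (q₁ ω) (lam * q₀ ω) ∂μ
      = ∫ ω, min (p'₁ ω) (lam * p'₀ ω) ∂μ
        + (1 - ∫ ω, p'₁ ω ∂μ) + lam * (1 - ∫ ω, p'₀ ω ∂μ) :=
  band_case2_attainment_general μ p'₀ p''₀ p'₁ p''₁ h₀nonneg h₀le h₁nonneg h₁le hint'₀ hint'₁ α lam
    c₀ c₁ hα hlam hc₀' hc₁' q₀ q₁ hq₀int hq₀one hq₁int hq₁one hfix₀ hfix₁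
end

section
/- (Theorem 5, upper bound.) Let (Ω, 𝔉, μ) be a σ-finite measure space, let p'₀, p''₀, p'₁, p''₁ : Ω → [0, ∞] be measurable with p'ᵢ ≤ p''ᵢ pointwise and p'₀, p'₁ integrable with real values. Let λ ≥ 0 and v₀, v₁ ∈ [0, 1], and set ε᷀ᵢ = 1 − ∫ p'ᵢ dμ and q̂ᵢ = vᵢ·p'ᵢ + (1 − vᵢ)·p''ᵢ for i = 0, 1. Then for all μ-densities p₀ ∈ [p'₀, p''₀] and p₁ ∈ [p'₁, p''₁]: ∫ min(p₀, λ·p₁) dμ ≤ ∫ min(q̂₀, λ·q̂₁) dμ + v₀·ε᷀₀ + λ·v₁·ε᷀₁, where the integral on the right-hand side is the Lebesgue integral of a nonnegative (possibly non-integrable) function, with values in [0, ∞]. -/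
/-!
Pointwise on the band `p' ≤ p ≤ p''`, the density `p` is at most its convex bound
`q̂ = v p' + (1 - v) p''` plus the slack `v (p - p')`. Since `min (a + c) (b + d) ≤ min a b + c + d`,
the same holds for `min (p₀, λ p₁)` with both slacks added, and integrating a slack gives
`v (1 - ∫ p') = v ε`.
-/

open MeasureTheory ENNReal

theorem ENNReal.le_mul_add_mul_add_mul_tsub {a b x' x x'' : ℝ≥0∞} (hab : 1 ≤ a + b)
    (h' : x' ≤ x) (h'' : x ≤ x'') : x ≤ a * x' + b * x'' + a * (x - x') := by
  calc x ≤ (a + b) * x := le_mul_of_one_le_left' hab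
    _ = a * x + b * x := add_mul a b x
    _ ≤ a * x + b * x'' := by gcongr
    _ = a * x' + b * x'' + a * (x - x') := by
      rw [add_right_comm, ← mul_add, add_tsub_cancel_of_le h']

theorem min_add_add_le {α : Type*} [AddCommMonoid α] [LinearOrder α] [CanonicallyOrderedAdd α]
    [IsOrderedAddMonoid α] (a b c d : α) : min (a + c) (b + d) ≤ min a b + c + d := by
  calc min (a + c) (b + d) ≤ min (a + (c + d)) (b + (c + d)) := by
        gcongr
        exacts [le_self_add, le_add_self]
    _ = min a b + c + d := by rw [min_add_add_right, add_assoc]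

theorem ENNReal.min_le_min_add_mul_tsub_add_mul_tsub {x₀ x'₀ x''₀ x₁ x'₁ x''₁ a₀ b₀ a₁ b₁ : ℝ≥0∞}
    (L : ℝ≥0∞) (hab₀ : 1 ≤ a₀ + b₀) (hab₁ : 1 ≤ a₁ + b₁)
    (h₀ : x'₀ ≤ x₀ ∧ x₀ ≤ x''₀) (h₁ : x'₁ ≤ x₁ ∧ x₁ ≤ x''₁) :
    min x₀ (L * x₁) ≤ min (a₀ * x'₀ + b₀ * x''₀) (L * (a₁ * x'₁ + b₁ * x''₁))
      + a₀ * (x₀ - x'₀) + L * a₁ * (x₁ - x'₁) := by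
  have hb₀ := le_mul_add_mul_add_mul_tsub hab₀ h₀.1 h₀.2
  have hb₁ : L * x₁ ≤ L * (a₁ * x'₁ + b₁ * x''₁) + L * a₁ * (x₁ - x'₁) := by
    rw [mul_assoc, ← mul_add]
    gcongr
    exact le_mul_add_mul_add_mul_tsub hab₁ h₁.1 h₁.2
  exact (min_le_min hb₀ hb₁).trans (min_add_add_le _ _ _ _)

theorem ENNReal.one_le_ofReal_add_ofReal_one_sub (v : ℝ) :
    1 ≤ ENNReal.ofReal v + ENNReal.ofReal (1 - v) := by
  simpa using ENNReal.ofReal_add_le (p := v) (q := 1 - v)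

theorem ENNReal.ofReal_mul_one_sub_toReal (v : ℝ) {I : ℝ≥0∞} (hI : I ≤ 1) :
    ENNReal.ofReal (v * (1 - I.toReal)) = ENNReal.ofReal v * (1 - I) := by
  have hI_top : I ≠ ∞ := ne_top_of_le_ne_top one_ne_top hI
  have hI_real : I.toReal ≤ 1 := toReal_le_of_le_ofReal zero_le_one (by simpa using hI)
  rw [ofReal_mul' (sub_nonneg.2 hI_real), ofReal_sub _ toReal_nonneg, ofReal_one,
    ofReal_toReal hI_top]

section Density

variable {Ω : Type*} [MeasurableSpace Ω] {μ : Measure Ω}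

theorem lintegral_ofReal_eq_one {p : Ω → ℝ} (hp : Integrable p μ) (hp_nonneg : 0 ≤ᵐ[μ] p)
    (hp_one : ∫ ω, p ω ∂μ = 1) : ∫⁻ ω, ENNReal.ofReal (p ω) ∂μ = 1 := by
  rw [← ofReal_integral_eq_lintegral_ofReal hp hp_nonneg, hp_one, ofReal_one]

theorem lintegral_add_mul_tsub_of_le {F P p' : Ω → ℝ≥0∞} (c : ℝ≥0∞) (hP : AEMeasurable P μ)
    (hp' : Measurable p') (hP_one : ∫⁻ ω, P ω ∂μ = 1) (hle : p' ≤ᵐ[μ] P) :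
    ∫⁻ ω, F ω + c * (P ω - p' ω) ∂μ = ∫⁻ ω, F ω ∂μ + c * (1 - ∫⁻ ω, p' ω ∂μ) := by
  have hp'_fin : ∫⁻ ω, p' ω ∂μ ≠ ∞ :=
    ne_top_of_le_ne_top one_ne_top (hP_one ▸ lintegral_mono_ae hle)
  have hslack : AEMeasurable (fun ω => P ω - p' ω) μ := hP.sub hp'.aemeasurable
  rw [lintegral_add_right' _ (hslack.const_mul c), lintegral_const_mul'' c hslack,
    lintegral_sub hp' hp'_fin hle, hP_one]

end Density

theorem band_upper_bound_general {Ω : Type*} [MeasurableSpace Ω] (μ : Measure Ω)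
    (p'₀ p''₀ p'₁ p''₁ : Ω → ℝ≥0∞)
    (hm'₀ : Measurable p'₀)
    (hm'₁ : Measurable p'₁)
    (lam v₀ v₁ : ℝ) (hlam : 0 ≤ lam)
    (ε₀ ε₁ : ℝ)
    (hε₀ : ε₀ = 1 - (∫⁻ ω, p'₀ ω ∂μ).toReal)
    (hε₁ : ε₁ = 1 - (∫⁻ ω, p'₁ ω ∂μ).toReal)
    (qhat₀ qhat₁ : Ω → ℝ≥0∞)
    (hqhat₀ : ∀ ω, qhat₀ ω = ENNReal.ofReal v₀ * p'₀ ω + ENNReal.ofReal (1 - v₀) * p''₀ ω)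
    (hqhat₁ : ∀ ω, qhat₁ ω = ENNReal.ofReal v₁ * p'₁ ω + ENNReal.ofReal (1 - v₁) * p''₁ ω)
    (p₀ p₁ : Ω → ℝ)
    (hp₀nonneg : ∀ ω, 0 ≤ p₀ ω)
    (hp₀int : Integrable p₀ μ) (hp₀one : ∫ ω, p₀ ω ∂μ = 1)
    (hp₀band : ∀ᵐ ω ∂μ, p'₀ ω ≤ ENNReal.ofReal (p₀ ω) ∧ ENNReal.ofReal (p₀ ω) ≤ p''₀ ω)
    (hp₁nonneg : ∀ ω, 0 ≤ p₁ ω)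
    (hp₁int : Integrable p₁ μ) (hp₁one : ∫ ω, p₁ ω ∂μ = 1)
    (hp₁band : ∀ᵐ ω ∂μ, p'₁ ω ≤ ENNReal.ofReal (p₁ ω) ∧ ENNReal.ofReal (p₁ ω) ≤ p''₁ ω) :
    ENNReal.ofReal (∫ ω, min (p₀ ω) (lam * p₁ ω) ∂μ)
      ≤ (∫⁻ ω, min (qhat₀ ω) (ENNReal.ofReal lam * qhat₁ ω) ∂μ)
        + ENNReal.ofReal (v₀ * ε₀) + ENNReal.ofReal (lam * v₁ * ε₁) := by
  set L := ENNReal.ofReal lam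
  set P₀ : Ω → ℝ≥0∞ := fun ω => ENNReal.ofReal (p₀ ω)
  set P₁ : Ω → ℝ≥0∞ := fun ω => ENNReal.ofReal (p₁ ω)
  have hP₀ : ∫⁻ ω, P₀ ω ∂μ = 1 := lintegral_ofReal_eq_one hp₀int (ae_of_all _ hp₀nonneg) hp₀one
  have hP₁ : ∫⁻ ω, P₁ ω ∂μ = 1 := lintegral_ofReal_eq_one hp₁int (ae_of_all _ hp₁nonneg) hp₁one
  have hlower₀ : p'₀ ≤ᵐ[μ] P₀ := hp₀band.mono fun _ h => h.1
  have hlower₁ : p'₁ ≤ᵐ[μ] P₁ := hp₁band.mono fun _ h => h.1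
  have hmin_int : Integrable (fun ω => min (p₀ ω) (lam * p₁ ω)) μ :=
    hp₀int.inf (hp₁int.const_mul lam)
  have hmin_nonneg : 0 ≤ᵐ[μ] fun ω => min (p₀ ω) (lam * p₁ ω) :=
    ae_of_all _ fun ω => le_min (hp₀nonneg ω) (mul_nonneg hlam (hp₁nonneg ω))
  calc ENNReal.ofReal (∫ ω, min (p₀ ω) (lam * p₁ ω) ∂μ)
      = ∫⁻ ω, min (P₀ ω) (L * P₁ ω) ∂μ := by
        simp_rw [ofReal_integral_eq_lintegral_ofReal hmin_int hmin_nonneg, ofReal_min,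
          ofReal_mul hlam, P₀, P₁, L]
    _ ≤ ∫⁻ ω, min (qhat₀ ω) (L * qhat₁ ω) + ENNReal.ofReal v₀ * (P₀ ω - p'₀ ω)
          + L * ENNReal.ofReal v₁ * (P₁ ω - p'₁ ω) ∂μ := by
        refine lintegral_mono_ae ?_
        filter_upwards [hp₀band, hp₁band] with ω h₀ h₁
        rw [hqhat₀, hqhat₁]
        exact min_le_min_add_mul_tsub_add_mul_tsub L (one_le_ofReal_add_ofReal_one_sub v₀)
          (one_le_ofReal_add_ofReal_one_sub v₁) h₀ h₁
    _ = ∫⁻ ω, min (qhat₀ ω) (L * qhat₁ ω) ∂μ + ENNReal.ofReal v₀ * (1 - ∫⁻ ω, p'₀ ω ∂μ)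
          + L * ENNReal.ofReal v₁ * (1 - ∫⁻ ω, p'₁ ω ∂μ) := by
        rw [lintegral_add_mul_tsub_of_le _ hp₁int.aemeasurable.ennreal_ofReal hm'₁ hP₁ hlower₁,
          lintegral_add_mul_tsub_of_le _ hp₀int.aemeasurable.ennreal_ofReal hm'₀ hP₀ hlower₀]
    _ = ∫⁻ ω, min (qhat₀ ω) (L * qhat₁ ω) ∂μ
          + ENNReal.ofReal (v₀ * ε₀) + ENNReal.ofReal (lam * v₁ * ε₁) := by
        rw [hε₀, hε₁, mul_assoc lam, ofReal_mul hlam, mul_assoc L,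
          ofReal_mul_one_sub_toReal v₀ (hP₀ ▸ lintegral_mono_ae hlower₀),
          ofReal_mul_one_sub_toReal v₁ (hP₁ ▸ lintegral_mono_ae hlower₁)]

/-- Theorem 5 (upper bound): every convex combination of the band boundaries yields an
upper bound on the objective `L_λ` over the density band. -/
theorem band_upper_bound {Ω : Type*} [MeasurableSpace Ω] (μ : Measure Ω) [SigmaFinite μ]
    (p'₀ p''₀ p'₁ p''₁ : Ω → ℝ≥0∞)
    (hm'₀ : Measurable p'₀) (hm''₀ : Measurable p''₀)
    (hm'₁ : Measurable p'₁) (hm''₁ : Measurable p''₁)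
    (h₀le : ∀ ω, p'₀ ω ≤ p''₀ ω) (h₁le : ∀ ω, p'₁ ω ≤ p''₁ ω)
    (hint'₀ : ∫⁻ ω, p'₀ ω ∂μ < ⊤) (hint'₁ : ∫⁻ ω, p'₁ ω ∂μ < ⊤)
    (lam v₀ v₁ : ℝ) (hlam : 0 ≤ lam)
    (hv₀ : v₀ ∈ Set.Icc (0 : ℝ) 1) (hv₁ : v₁ ∈ Set.Icc (0 : ℝ) 1)
    (ε₀ ε₁ : ℝ)
    (hε₀ : ε₀ = 1 - (∫⁻ ω, p'₀ ω ∂μ).toReal)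
    (hε₁ : ε₁ = 1 - (∫⁻ ω, p'₁ ω ∂μ).toReal)
    (qhat₀ qhat₁ : Ω → ℝ≥0∞)
    (hqhat₀ : ∀ ω, qhat₀ ω = ENNReal.ofReal v₀ * p'₀ ω + ENNReal.ofReal (1 - v₀) * p''₀ ω)
    (hqhat₁ : ∀ ω, qhat₁ ω = ENNReal.ofReal v₁ * p'₁ ω + ENNReal.ofReal (1 - v₁) * p''₁ ω)
    (p₀ p₁ : Ω → ℝ)
    (hp₀m : Measurable p₀) (hp₀nonneg : ∀ ω, 0 ≤ p₀ ω)
    (hp₀int : Integrable p₀ μ) (hp₀one : ∫ ω, p₀ ω ∂μ = 1)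
    (hp₀band : ∀ᵐ ω ∂μ, p'₀ ω ≤ ENNReal.ofReal (p₀ ω) ∧ ENNReal.ofReal (p₀ ω) ≤ p''₀ ω)
    (hp₁m : Measurable p₁) (hp₁nonneg : ∀ ω, 0 ≤ p₁ ω)
    (hp₁int : Integrable p₁ μ) (hp₁one : ∫ ω, p₁ ω ∂μ = 1)
    (hp₁band : ∀ᵐ ω ∂μ, p'₁ ω ≤ ENNReal.ofReal (p₁ ω) ∧ ENNReal.ofReal (p₁ ω) ≤ p''₁ ω) :
    ENNReal.ofReal (∫ ω, min (p₀ ω) (lam * p₁ ω) ∂μ)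
      ≤ (∫⁻ ω, min (qhat₀ ω) (ENNReal.ofReal lam * qhat₁ ω) ∂μ)
        + ENNReal.ofReal (v₀ * ε₀) + ENNReal.ofReal (lam * v₁ * ε₁) :=
  band_upper_bound_general μ p'₀ p''₀ p'₁ p''₁ hm'₀ hm'₁ lam v₀ v₁ hlam ε₀ ε₁ hε₀ hε₁ qhat₀ qhat₁
    hqhat₀ hqhat₁ p₀ p₁ hp₀nonneg hp₀int hp₀one hp₀band hp₁nonneg hp₁int hp₁one hp₁band
end

section
/- (Theorem 4 combined with Theorem 3: least favorability of the band fixed-point densities.) Let (Ω, 𝔉, μ) be a σ-finite measure space and let p'₀, p''₀, p'₁, p''₁ : Ω → ℝ be measurable with 0 ≤ p'ᵢ ≤ p''ᵢ pointwise and p'₀, p'₁ integrable. Let α ≥ 0 and c₀, c₁ > 0 with α·c₀ ≤ 1 and α·c₁ ≤ 1. Suppose q₀, q₁ are μ-densities satisfying μ-a.e. q₀ = min(p''₀, max(c₀·(α·q₀ + q₁), p'₀)) and q₁ = min(p''₁, max(c₁·(q₀ + α·q₁), p'₁)), and suppose the non-degeneracy condition holds: for μ-a.e. ω, if p''₀(ω)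 + p''₁(ω) > 0 then q₀(ω) + q₁(ω) > 0. Then for every λ ≥ 0 and all μ-densities p₀ ∈ [p'₀, p''₀] and p₁ ∈ [p'₁, p''₁]: ∫ min(p₀, λ·p₁) dμ ≤ ∫ min(q₀, λ·q₁) dμ. -/
/-!
With `A = {q₀ ≤ λ q₁}` one has `∫ min(q₀, λ q₁) = ∫_A q₀ + λ ∫_{Aᶜ} q₁`, while
`∫ min(p₀, λ p₁) ≤ ∫_A p₀ + λ ∫_{Aᶜ} p₁` for any `p₀, p₁`; so it suffices that
`∫_A p₀ ≤ ∫_A q₀` and `∫_{Aᶜ} p₁ ≤ ∫_{Aᶜ} q₁`.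

Writing `βᵢ = 1 - α cᵢ`, the fixed-point equation puts `q₀` at its upper bound `p''₀` where
`β₀ q₀ < c₀ q₁` and at its lower bound `p'₀` where `c₀ q₁ < β₀ q₀`. If `β₀ λ < c₀`, then on `A`
the first case occurs, so `p₀ ≤ q₀` there; otherwise on `Aᶜ` the second case occurs, so `q₀ ≤ p₀`
there, and since both are densities, `∫_A p₀ ≤ ∫_A q₀` again. The same dichotomy, on the sign of
`β₁ - c₁ λ`, handles `q₁`. Non-degeneracy covers the points of `A` where `q₀ = q₁ = 0`.
-/

open MeasureTheory

section Clamp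

variable {a b x q : ℝ}

theorem eq_of_eq_min_max_of_lt_s7 (h : q = min b (max x a)) (hq : q < x) : q = b := by
  rcases min_choice b (max x a) with hmin | hmin
  · rwa [hmin] at h
  · rw [hmin] at h
    exact absurd hq (not_lt.2 (h ▸ le_max_left x a))

theorem eq_of_eq_min_max_of_gt (hab : a ≤ b) (h : q = min b (max x a)) (hq : x < q) :
    q = a := by
  rcases max_choice x a with hmax | hmax
  · rw [hmax] at h
    exact absurd hq (not_lt.2 (h ▸ min_le_right _ _))
  · rwa [hmax, min_eq_right hab] at h

end Clamp

section Integral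

variable {Ω : Type*} [MeasurableSpace Ω] {μ : Measure Ω}

theorem setIntegral_le_of_integral_eq_of_ae_compl {s : Set Ω} (hs : MeasurableSet s)
    {f g : Ω → ℝ} (hf : Integrable f μ) (hg : Integrable g μ)
    (hfg : ∫ ω, f ω ∂μ = ∫ ω, g ω ∂μ) (h : ∀ᵐ ω ∂μ, ω ∈ sᶜ → g ω ≤ f ω) :
    ∫ ω in s, f ω ∂μ ≤ ∫ ω in s, g ω ∂μ := by
  have hcompl := setIntegral_mono_on_ae hg.integrableOn hf.integrableOn hs.compl h
  linarith [integral_add_compl hs hf, integral_add_compl hs hg]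

theorem integral_min_le_setIntegral_add_setIntegral_compl {s : Set Ω} (hs : MeasurableSet s)
    {f g : Ω → ℝ} (hf : Integrable f μ) (hg : Integrable g μ) :
    ∫ ω, min (f ω) (g ω) ∂μ ≤ ∫ ω in s, f ω ∂μ + ∫ ω in sᶜ, g ω ∂μ := by
  have hmin : Integrable (fun ω ↦ min (f ω) (g ω)) μ := hf.inf hg
  rw [← integral_add_compl hs hmin]
  exact add_le_add
    (setIntegral_mono hmin.integrableOn hf.integrableOn fun ω ↦ min_le_left _ _)
    (setIntegral_mono hmin.integrableOn hg.integrableOn fun ω ↦ min_le_right _ _)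

theorem integral_min_eq_setIntegral_add_setIntegral_compl {f g : Ω → ℝ}
    (hfm : Measurable f) (hgm : Measurable g) (hf : Integrable f μ) (hg : Integrable g μ) :
    ∫ ω, min (f ω) (g ω) ∂μ =
      ∫ ω in {ω | f ω ≤ g ω}, f ω ∂μ + ∫ ω in {ω | f ω ≤ g ω}ᶜ, g ω ∂μ := by
  have hs : MeasurableSet {ω | f ω ≤ g ω} := measurableSet_le hfm hgm
  have hmin : Integrable (fun ω ↦ min (f ω) (g ω)) μ := hf.inf hg
  rw [← integral_add_compl hs hmin]
  congr 1
  · exact setIntegral_congr_fun hs fun ω hω ↦ min_eq_left hω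
  · exact setIntegral_congr_fun hs.compl fun ω (hω : ¬f ω ≤ g ω) ↦ min_eq_right (not_le.1 hω).le

theorem setIntegral_le_of_fixedPoint₀ {a b p q r : Ω → ℝ} {α c lam : ℝ}
    (hqm : Measurable q) (hrm : Measurable r) (hab : ∀ ω, a ω ≤ b ω) (hc : 0 < c)
    (hαc : α * c ≤ 1) (hq : ∀ ω, 0 ≤ q ω) (hr : ∀ ω, 0 ≤ r ω)
    (hfix : ∀ᵐ ω ∂μ, q ω = min (b ω) (max (c * (α * q ω + r ω)) (a ω)))
    (hnondeg : ∀ᵐ ω ∂μ, 0 < b ω → 0 < q ω + r ω)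
    (hp : Integrable p μ) (hqi : Integrable q μ) (hpq : ∫ ω, p ω ∂μ = ∫ ω, q ω ∂μ)
    (hband : ∀ᵐ ω ∂μ, a ω ≤ p ω ∧ p ω ≤ b ω) :
    ∫ ω in {ω | q ω ≤ lam * r ω}, p ω ∂μ ≤ ∫ ω in {ω | q ω ≤ lam * r ω}, q ω ∂μ := by
  have hA : MeasurableSet {ω | q ω ≤ lam * r ω} := measurableSet_le hqm (hrm.const_mul lam)
  have hβ : 0 ≤ 1 - α * c := by linarith
  rcases lt_or_ge ((1 - α * c) * lam) c with hcase | hcase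
  · refine setIntegral_mono_on_ae hp.integrableOn hqi.integrableOn hA ?_
    filter_upwards [hfix, hnondeg, hband] with ω hfixω hnondegω hbandω hω
    rcases (hr ω).eq_or_lt with hr0 | hr0
    · have hq0 : q ω = 0 := le_antisymm (by simpa [← hr0] using hω) (hq ω)
      have hb : b ω ≤ 0 := not_lt.1 fun hb ↦ by simpa [hq0, ← hr0] using hnondegω hb
      linarith [hbandω.2]
    · have hqb : q ω = b ω := eq_of_eq_min_max_of_lt_s7 hfixω <| by
        nlinarith [mul_le_mul_of_nonneg_left (show q ω ≤ lam * r ω from hω) hβ,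
          mul_lt_mul_of_pos_right hcase hr0]
      linarith [hbandω.2]
  · have hβ' : 0 < 1 - α * c := lt_of_le_of_ne hβ fun h0 ↦ by
      rw [← h0, zero_mul] at hcase; linarith
    refine setIntegral_le_of_integral_eq_of_ae_compl hA hp hqi hpq ?_
    filter_upwards [hfix, hband] with ω hfixω hbandω hω
    have hω : lam * r ω < q ω := not_le.1 hω
    have hqa : q ω = a ω := eq_of_eq_min_max_of_gt (hab ω) hfixω <| by
      nlinarith [mul_lt_mul_of_pos_left hω hβ', mul_le_mul_of_nonneg_right hcase (hr ω)]
    linarith [hbandω.1]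

theorem setIntegral_le_of_fixedPoint₁ {a b p q r : Ω → ℝ} {α c lam : ℝ}
    (hqm : Measurable q) (hrm : Measurable r) (hab : ∀ ω, a ω ≤ b ω) (ha : ∀ ω, 0 ≤ a ω)
    (hc : 0 < c) (hq : ∀ ω, 0 ≤ q ω)
    (hfix : ∀ᵐ ω ∂μ, q ω = min (b ω) (max (c * (r ω + α * q ω)) (a ω)))
    (hp : Integrable p μ) (hqi : Integrable q μ) (hpq : ∫ ω, p ω ∂μ = ∫ ω, q ω ∂μ)
    (hband : ∀ᵐ ω ∂μ, a ω ≤ p ω ∧ p ω ≤ b ω) :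
    ∫ ω in {ω | r ω ≤ lam * q ω}ᶜ, p ω ∂μ ≤ ∫ ω in {ω | r ω ≤ lam * q ω}ᶜ, q ω ∂μ := by
  have hA : MeasurableSet {ω | r ω ≤ lam * q ω} := measurableSet_le hrm (hqm.const_mul lam)
  rcases lt_or_ge (c * lam) (1 - α * c) with hcase | hcase
  · refine setIntegral_le_of_integral_eq_of_ae_compl hA.compl hp hqi hpq ?_
    filter_upwards [hfix, hband] with ω hfixω hbandω hω
    rw [compl_compl] at hω
    rcases (hq ω).eq_or_lt with hq0 | hq0
    · linarith [ha ω, hbandω.1]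
    · have hqa : q ω = a ω := eq_of_eq_min_max_of_gt (hab ω) hfixω <| by
        nlinarith [mul_le_mul_of_nonneg_left (show r ω ≤ lam * q ω from hω) hc.le,
          mul_lt_mul_of_pos_right hcase hq0]
      linarith [hbandω.1]
  · refine setIntegral_mono_on_ae hp.integrableOn hqi.integrableOn hA.compl ?_
    filter_upwards [hfix, hband] with ω hfixω hbandω hω
    have hω : lam * q ω < r ω := not_le.1 hω
    have hqb : q ω = b ω := eq_of_eq_min_max_of_lt_s7 hfixω <| by
      nlinarith [mul_lt_mul_of_pos_left hω hc, mul_le_mul_of_nonneg_right hcase (hq ω)]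
    linarith [hbandω.2]

end Integral

theorem band_fixed_point_least_favorable_general {Ω : Type*} [MeasurableSpace Ω]
    (μ : Measure Ω)
    (p'₀ p''₀ p'₁ p''₁ : Ω → ℝ)
    (h₀le : ∀ ω, p'₀ ω ≤ p''₀ ω)
    (h₁nonneg : ∀ ω, 0 ≤ p'₁ ω) (h₁le : ∀ ω, p'₁ ω ≤ p''₁ ω)
    (α c₀ c₁ : ℝ) (hc₀ : 0 < c₀) (hc₁ : 0 < c₁)
    (hαc₀ : α * c₀ ≤ 1)
    (q₀ q₁ : Ω → ℝ)
    (hq₀m : Measurable q₀) (hq₀nonneg : ∀ ω, 0 ≤ q₀ ω)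
    (hq₀int : Integrable q₀ μ) (hq₀one : ∫ ω, q₀ ω ∂μ = 1)
    (hq₁m : Measurable q₁) (hq₁nonneg : ∀ ω, 0 ≤ q₁ ω)
    (hq₁int : Integrable q₁ μ) (hq₁one : ∫ ω, q₁ ω ∂μ = 1)
    (hfix₀ : ∀ᵐ ω ∂μ, q₀ ω = min (p''₀ ω) (max (c₀ * (α * q₀ ω + q₁ ω)) (p'₀ ω)))
    (hfix₁ : ∀ᵐ ω ∂μ, q₁ ω = min (p''₁ ω) (max (c₁ * (q₀ ω + α * q₁ ω)) (p'₁ ω)))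
    (hnondeg : ∀ᵐ ω ∂μ, 0 < p''₀ ω + p''₁ ω → 0 < q₀ ω + q₁ ω)
    (lam : ℝ) (hlam : 0 ≤ lam)
    (p₀ p₁ : Ω → ℝ)
    (hp₀int : Integrable p₀ μ) (hp₀one : ∫ ω, p₀ ω ∂μ = 1)
    (hp₀band : ∀ᵐ ω ∂μ, p'₀ ω ≤ p₀ ω ∧ p₀ ω ≤ p''₀ ω)
    (hp₁int : Integrable p₁ μ) (hp₁one : ∫ ω, p₁ ω ∂μ = 1)
    (hp₁band : ∀ᵐ ω ∂μ, p'₁ ω ≤ p₁ ω ∧ p₁ ω ≤ p''₁ ω) :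
    ∫ ω, min (p₀ ω) (lam * p₁ ω) ∂μ ≤ ∫ ω, min (q₀ ω) (lam * q₁ ω) ∂μ := by
  set A := {ω | q₀ ω ≤ lam * q₁ ω}
  have h₀ : ∫ ω in A, p₀ ω ∂μ ≤ ∫ ω in A, q₀ ω ∂μ :=
    setIntegral_le_of_fixedPoint₀ hq₀m hq₁m h₀le hc₀ hαc₀ hq₀nonneg hq₁nonneg hfix₀
      (by filter_upwards [hnondeg] with ω h hb using h (by linarith [h₁nonneg ω, h₁le ω]))
      hp₀int hq₀int (hp₀one.trans hq₀one.symm) hp₀band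
  have h₁ : ∫ ω in Aᶜ, p₁ ω ∂μ ≤ ∫ ω in Aᶜ, q₁ ω ∂μ :=
    setIntegral_le_of_fixedPoint₁ hq₁m hq₀m h₁le h₁nonneg hc₁ hq₁nonneg hfix₁
      hp₁int hq₁int (hp₁one.trans hq₁one.symm) hp₁band
  calc ∫ ω, min (p₀ ω) (lam * p₁ ω) ∂μ
      ≤ ∫ ω in A, p₀ ω ∂μ + ∫ ω in Aᶜ, lam * p₁ ω ∂μ :=
        integral_min_le_setIntegral_add_setIntegral_compl
          (measurableSet_le hq₀m (hq₁m.const_mul lam)) hp₀int (hp₁int.const_mul lam)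
    _ = ∫ ω in A, p₀ ω ∂μ + lam * ∫ ω in Aᶜ, p₁ ω ∂μ := by rw [integral_const_mul]
    _ ≤ ∫ ω in A, q₀ ω ∂μ + lam * ∫ ω in Aᶜ, q₁ ω ∂μ := by gcongr
    _ = ∫ ω in A, q₀ ω ∂μ + ∫ ω in Aᶜ, lam * q₁ ω ∂μ := by rw [integral_const_mul]
    _ = ∫ ω, min (q₀ ω) (lam * q₁ ω) ∂μ :=
        (integral_min_eq_setIntegral_add_setIntegral_compl hq₀m (hq₁m.const_mul lam)
          hq₀int (hq₁int.const_mul lam)).symm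

/-- Theorem 4 combined with Theorem 3: least favorability of the band fixed-point
densities, i.e. they maximize `∫ min(p₀, λ p₁) dμ` over the bands for every `λ ≥ 0`. -/
theorem band_fixed_point_least_favorable {Ω : Type*} [MeasurableSpace Ω]
    (μ : Measure Ω) [SigmaFinite μ]
    (p'₀ p''₀ p'₁ p''₁ : Ω → ℝ)
    (hm'₀ : Measurable p'₀) (hm''₀ : Measurable p''₀)
    (hm'₁ : Measurable p'₁) (hm''₁ : Measurable p''₁)
    (h₀nonneg : ∀ ω, 0 ≤ p'₀ ω) (h₀le : ∀ ω, p'₀ ω ≤ p''₀ ω)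
    (h₁nonneg : ∀ ω, 0 ≤ p'₁ ω) (h₁le : ∀ ω, p'₁ ω ≤ p''₁ ω)
    (hint'₀ : Integrable p'₀ μ) (hint'₁ : Integrable p'₁ μ)
    (α c₀ c₁ : ℝ) (hα : 0 ≤ α) (hc₀ : 0 < c₀) (hc₁ : 0 < c₁)
    (hαc₀ : α * c₀ ≤ 1) (hαc₁ : α * c₁ ≤ 1)
    (q₀ q₁ : Ω → ℝ)
    (hq₀m : Measurable q₀) (hq₀nonneg : ∀ ω, 0 ≤ q₀ ω)
    (hq₀int : Integrable q₀ μ) (hq₀one : ∫ ω, q₀ ω ∂μ = 1)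
    (hq₁m : Measurable q₁) (hq₁nonneg : ∀ ω, 0 ≤ q₁ ω)
    (hq₁int : Integrable q₁ μ) (hq₁one : ∫ ω, q₁ ω ∂μ = 1)
    (hfix₀ : ∀ᵐ ω ∂μ, q₀ ω = min (p''₀ ω) (max (c₀ * (α * q₀ ω + q₁ ω)) (p'₀ ω)))
    (hfix₁ : ∀ᵐ ω ∂μ, q₁ ω = min (p''₁ ω) (max (c₁ * (q₀ ω + α * q₁ ω)) (p'₁ ω)))
    (hnondeg : ∀ᵐ ω ∂μ, 0 < p''₀ ω + p''₁ ω → 0 < q₀ ω + q₁ ω)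
    (lam : ℝ) (hlam : 0 ≤ lam)
    (p₀ p₁ : Ω → ℝ)
    (hp₀m : Measurable p₀) (hp₀nonneg : ∀ ω, 0 ≤ p₀ ω)
    (hp₀int : Integrable p₀ μ) (hp₀one : ∫ ω, p₀ ω ∂μ = 1)
    (hp₀band : ∀ᵐ ω ∂μ, p'₀ ω ≤ p₀ ω ∧ p₀ ω ≤ p''₀ ω)
    (hp₁m : Measurable p₁) (hp₁nonneg : ∀ ω, 0 ≤ p₁ ω)
    (hp₁int : Integrable p₁ μ) (hp₁one : ∫ ω, p₁ ω ∂μ = 1)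
    (hp₁band : ∀ᵐ ω ∂μ, p'₁ ω ≤ p₁ ω ∧ p₁ ω ≤ p''₁ ω) :
    ∫ ω, min (p₀ ω) (lam * p₁ ω) ∂μ ≤ ∫ ω, min (q₀ ω) (lam * q₁ ω) ∂μ :=
  band_fixed_point_least_favorable_general μ p'₀ p''₀ p'₁ p''₁ h₀le h₁nonneg h₁le α c₀ c₁ hc₀ hc₁
    hαc₀ q₀ q₁ hq₀m hq₀nonneg hq₀int hq₀one hq₁m hq₁nonneg hq₁int hq₁one hfix₀ hfix₁ hnondeg lam
    hlam p₀ p₁ hp₀int hp₀one hp₀band hp₁int hp₁one hp₁band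
end

section
/- (Stochastic-dominance property of the band fixed-point density under the null hypothesis.) Let (Ω, 𝔉, μ) be a σ-finite measure space and let p'₀, p''₀ : Ω → ℝ be measurable with 0 ≤ p'₀ ≤ p''₀ pointwise and p'₀ integrable. Let α ≥ 0 and c₀ > 0 with α·c₀ ≤ 1, let q₁ : Ω → ℝ be measurable and nonnegative, and let q₀ be a μ-density satisfying μ-a.e. q₀ = min(p''₀, max(c₀·(α·q₀ + q₁), p'₀)). Then for every η ≥ 0 and every μ-density p₀ ∈ [p'₀, p''₀]: ∫_{{ω : q₁(ω) > η·q₀(ω)}} p₀ dμ ≤ ∫_{{ω : q₁(ω) > η·q₀(ω)}} q₀ dμ. -/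
/-!
Put `k = c₀ (α + η)` and let `A = {q₁ > η q₀}` be the rejection region. If `k ≥ 1`, then on `A`
the unclipped value `c₀ (α q₀ + q₁)` exceeds `k q₀ ≥ q₀`, so the fixed point is clipped at the
upper envelope: `q₀ = p''₀ ≥ p₀` on `A`. If `k < 1`, then off `A` the unclipped value is at most
`k q₀`, which lies below `q₀` unless `q₀ = 0`, so `q₀ ≤ max p'₀ 0 ≤ p₀` off `A`; as `p₀` and `q₀`
have the same total mass, the inequality on `Aᶜ` turns into the claimed one on `A`.
-/

open MeasureTheory

section Clip

variable {q u l v : ℝ}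

theorem eq_of_eq_min_max_of_lt_s8 (hfix : q = min u (max v l)) (hv : q < v) : q = u := by
  rcases min_choice u (max v l) with h | h
  · exact hfix.trans h
  · exact absurd (hfix.trans h ▸ le_max_left v l) hv.not_ge

theorem le_of_eq_min_max_of_gt (hfix : q = min u (max v l)) (hv : v < q) : q ≤ l := by
  have hq : q ≤ max v l := hfix.le.trans (min_le_right _ _)
  exact (le_max_iff.mp hq).resolve_left hv.not_ge

variable {c a η r : ℝ}

theorem clip_fixed_point_eq_upper (hc : 0 < c) (hq : 0 ≤ q) (hk : 1 ≤ c * (a + η))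
    (hr : η * q < r) (hfix : q = min u (max (c * (a * q + r)) l)) : q = u := by
  refine eq_of_eq_min_max_of_lt_s8 hfix ?_
  calc q ≤ c * (a + η) * q := le_mul_of_one_le_left hq hk
    _ = c * (a * q + η * q) := by ring
    _ < c * (a * q + r) := by gcongr

theorem clip_fixed_point_le_max_lower (hc : 0 ≤ c) (hq : 0 ≤ q) (hk : c * (a + η) < 1)
    (hr : r ≤ η * q) (hfix : q = min u (max (c * (a * q + r)) l)) : q ≤ max l 0 := by
  rcases hq.eq_or_lt with rfl | hpos
  · exact le_max_right l 0
  refine le_max_of_le_left (le_of_eq_min_max_of_gt hfix ?_)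
  calc c * (a * q + r) ≤ c * (a * q + η * q) := by gcongr
    _ = c * (a + η) * q := by ring
    _ < q := mul_lt_of_lt_one_left hpos hk

end Clip

theorem setIntegral_le_setIntegral_of_integral_eq {Ω : Type*} [MeasurableSpace Ω]
    {μ : Measure Ω} {f g : Ω → ℝ} {s : Set Ω} (hs : MeasurableSet s)
    (hf : Integrable f μ) (hg : Integrable g μ) (hfg : ∫ x, f x ∂μ = ∫ x, g x ∂μ)
    (hcompl : ∀ᵐ x ∂μ, x ∈ sᶜ → g x ≤ f x) : ∫ x in s, f x ∂μ ≤ ∫ x in s, g x ∂μ := by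
  have hle : ∫ x in sᶜ, g x ∂μ ≤ ∫ x in sᶜ, f x ∂μ :=
    setIntegral_mono_on_ae hg.integrableOn hf.integrableOn hs.compl hcompl
  have hf_split := integral_add_compl hs hf
  have hg_split := integral_add_compl hs hg
  linarith

theorem band_fixed_point_stochastic_dominance_null_general {Ω : Type*} [MeasurableSpace Ω]
    (μ : Measure Ω)
    (p'₀ p''₀ : Ω → ℝ)
    (α c₀ : ℝ) (hc₀ : 0 < c₀)
    (q₁ : Ω → ℝ) (hq₁m : Measurable q₁)
    (q₀ : Ω → ℝ)
    (hq₀m : Measurable q₀) (hq₀nonneg : ∀ ω, 0 ≤ q₀ ω)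
    (hq₀int : Integrable q₀ μ) (hq₀one : ∫ ω, q₀ ω ∂μ = 1)
    (hfix₀ : ∀ᵐ ω ∂μ, q₀ ω = min (p''₀ ω) (max (c₀ * (α * q₀ ω + q₁ ω)) (p'₀ ω)))
    (η : ℝ)
    (p₀ : Ω → ℝ)
    (hp₀nonneg : ∀ ω, 0 ≤ p₀ ω)
    (hp₀int : Integrable p₀ μ) (hp₀one : ∫ ω, p₀ ω ∂μ = 1)
    (hp₀band : ∀ᵐ ω ∂μ, p'₀ ω ≤ p₀ ω ∧ p₀ ω ≤ p''₀ ω) :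
    ∫ ω in {ω | q₁ ω > η * q₀ ω}, p₀ ω ∂μ ≤ ∫ ω in {ω | q₁ ω > η * q₀ ω}, q₀ ω ∂μ := by
  have hA : MeasurableSet {ω | q₁ ω > η * q₀ ω} := measurableSet_lt (hq₀m.const_mul η) hq₁m
  rcases le_or_gt 1 (c₀ * (α + η)) with hk | hk
  · refine setIntegral_mono_on_ae hp₀int.integrableOn hq₀int.integrableOn hA ?_
    filter_upwards [hfix₀, hp₀band] with ω hfix hband hωA
    rw [clip_fixed_point_eq_upper hc₀ (hq₀nonneg ω) hk hωA hfix]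
    exact hband.2
  · refine setIntegral_le_setIntegral_of_integral_eq hA hp₀int hq₀int
      (hp₀one.trans hq₀one.symm) ?_
    filter_upwards [hfix₀, hp₀band] with ω hfix hband hωA
    exact (clip_fixed_point_le_max_lower hc₀.le (hq₀nonneg ω) hk (not_lt.mp hωA) hfix).trans
      (max_le hband.1 (hp₀nonneg ω))

/-- Stochastic-dominance property of the band fixed-point density under the null
hypothesis: `q₀` maximizes the probability of the rejection region over its band. -/
theorem band_fixed_point_stochastic_dominance_null {Ω : Type*} [MeasurableSpace Ω]
    (μ : Measure Ω) [SigmaFinite μ]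
    (p'₀ p''₀ : Ω → ℝ)
    (hm'₀ : Measurable p'₀) (hm''₀ : Measurable p''₀)
    (h₀nonneg : ∀ ω, 0 ≤ p'₀ ω) (h₀le : ∀ ω, p'₀ ω ≤ p''₀ ω)
    (hint'₀ : Integrable p'₀ μ)
    (α c₀ : ℝ) (hα : 0 ≤ α) (hc₀ : 0 < c₀) (hαc₀ : α * c₀ ≤ 1)
    (q₁ : Ω → ℝ) (hq₁m : Measurable q₁) (hq₁nonneg : ∀ ω, 0 ≤ q₁ ω)
    (q₀ : Ω → ℝ)
    (hq₀m : Measurable q₀) (hq₀nonneg : ∀ ω, 0 ≤ q₀ ω)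
    (hq₀int : Integrable q₀ μ) (hq₀one : ∫ ω, q₀ ω ∂μ = 1)
    (hfix₀ : ∀ᵐ ω ∂μ, q₀ ω = min (p''₀ ω) (max (c₀ * (α * q₀ ω + q₁ ω)) (p'₀ ω)))
    (η : ℝ) (hη : 0 ≤ η)
    (p₀ : Ω → ℝ)
    (hp₀m : Measurable p₀) (hp₀nonneg : ∀ ω, 0 ≤ p₀ ω)
    (hp₀int : Integrable p₀ μ) (hp₀one : ∫ ω, p₀ ω ∂μ = 1)
    (hp₀band : ∀ᵐ ω ∂μ, p'₀ ω ≤ p₀ ω ∧ p₀ ω ≤ p''₀ ω) :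
    ∫ ω in {ω | q₁ ω > η * q₀ ω}, p₀ ω ∂μ ≤ ∫ ω in {ω | q₁ ω > η * q₀ ω}, q₀ ω ∂μ :=
  band_fixed_point_stochastic_dominance_null_general μ p'₀ p''₀ α c₀ hc₀ q₁ hq₁m q₀ hq₀m hq₀nonneg
    hq₀int hq₀one hfix₀ η p₀ hp₀nonneg hp₀int hp₀one hp₀band
end

section
/- (Stochastic-dominance property of the band fixed-point density under the alternative.) Let (Ω, 𝔉, μ) be a σ-finite measure space and let p'₁, p''₁ : Ω → ℝ be measurable with 0 ≤ p'₁ ≤ p''₁ pointwise and p'₁ integrable. Let α ≥ 0 and c₁ > 0 with α·c₁ ≤ 1, let q₀ : Ω → ℝ be measurable and nonnegative, and let q₁ be a μ-density satisfying μ-a.e. q₁ = min(p''₁, max(c₁·(q₀ + α·q₁), p'₁)). Then for every η ≥ 0 and every μ-density p₁ ∈ [p'₁, p''₁]: ∫_A p₁ dμ ≤ ∫_A q₁ dμ, where A = {ω : q₁(ω) ≤ η·q₀(ω) and q₀(ω) > 0}. -/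
/-!
Put `κ = 1 - α c₁ ≥ 0`. Wherever `q₁` lies strictly above `p'₁` the fixed-point equation gives
`κ q₁ ≤ c₁ q₀`, and wherever it lies strictly below `p''₁` it gives `c₁ q₀ ≤ κ q₁`.
If `c₁ ≤ η κ`, the first inequality shows that every point where `q₁ > p₁` lies in `A`; so
`q₁ ≤ p₁` off `A`, and since both densities have mass one, `∫_A p₁ ≤ ∫_A q₁`.
If `η κ < c₁`, the second inequality rules out `q₁ < p₁` on `A`, so `p₁ ≤ q₁` on `A`.
-/

open MeasureTheory

section Clamp

variable {β : Type*} [LinearOrder β] {x y l u : β}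

theorem le_of_eq_min_max_of_lt_left (hx : x = min u (max y l)) (hlx : l < x) : x ≤ y :=
  (le_max_iff.mp (hx.le.trans (min_le_right _ _))).resolve_right hlx.not_ge

theorem le_of_eq_min_max_of_lt_right (hx : x = min u (max y l)) (hxu : x < u) : y ≤ x := by
  rw [hx, min_eq_right (not_lt.mp fun h ↦ (min_eq_left h.le ▸ hx ▸ hxu).false)]
  exact le_max_left y l

end Clamp

section FixedPoint

variable {x r l u c α η : ℝ}

theorem le_mul_and_pos_of_eq_min_max_of_lt (hx : x = min u (max (c * (r + α * x)) l))
    (hlx : l < x) (hx₀ : 0 < x) (hc : 0 < c) (hαc : α * c ≤ 1) (hη : c ≤ η * (1 - α * c)) :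
    x ≤ η * r ∧ 0 < r := by
  have hκx : (1 - α * c) * x ≤ c * r := by
    nlinarith [le_of_eq_min_max_of_lt_left hx hlx]
  have hκ : 0 < 1 - α * c := by
    rcases hαc.lt_or_eq with h | h
    · linarith
    · nlinarith [h ▸ hη]
  have hr : 0 < r := by nlinarith [mul_pos hκ hx₀]
  exact ⟨by nlinarith, hr⟩

theorem mul_lt_of_eq_min_max_of_lt (hx : x = min u (max (c * (r + α * x)) l))
    (hxu : x < u) (hr : 0 < r) (hαc : α * c ≤ 1) (hη : η * (1 - α * c) < c) :
    η * r < x := by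
  have hcr : c * r ≤ (1 - α * c) * x := by
    nlinarith [le_of_eq_min_max_of_lt_right hx hxu]
  by_contra! hxr
  nlinarith [mul_le_mul_of_nonneg_left hxr (sub_nonneg.mpr hαc)]

end FixedPoint

theorem setIntegral_le_of_integral_eq_of_ae_compl_le {Ω : Type*} [MeasurableSpace Ω]
    {μ : Measure Ω} {f g : Ω → ℝ} {s : Set Ω} (hf : Integrable f μ) (hg : Integrable g μ)
    (hfg : ∫ ω, f ω ∂μ = ∫ ω, g ω ∂μ) (hs : MeasurableSet s)
    (h : ∀ᵐ ω ∂μ, ω ∈ sᶜ → g ω ≤ f ω) :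
    ∫ ω in s, f ω ∂μ ≤ ∫ ω in s, g ω ∂μ := by
  have hcompl := setIntegral_mono_on_ae hg.integrableOn hf.integrableOn hs.compl h
  linarith [integral_add_compl hs hf, integral_add_compl hs hg]

theorem band_fixed_point_stochastic_dominance_alt_general {Ω : Type*} [MeasurableSpace Ω]
    (μ : Measure Ω)
    (p'₁ p''₁ : Ω → ℝ)
    (α c₁ : ℝ) (hc₁ : 0 < c₁) (hαc₁ : α * c₁ ≤ 1)
    (q₀ : Ω → ℝ) (hq₀m : Measurable q₀)
    (q₁ : Ω → ℝ)
    (hq₁m : Measurable q₁)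
    (hq₁int : Integrable q₁ μ) (hq₁one : ∫ ω, q₁ ω ∂μ = 1)
    (hfix₁ : ∀ᵐ ω ∂μ, q₁ ω = min (p''₁ ω) (max (c₁ * (q₀ ω + α * q₁ ω)) (p'₁ ω)))
    (η : ℝ)
    (p₁ : Ω → ℝ)
    (hp₁nonneg : ∀ ω, 0 ≤ p₁ ω)
    (hp₁int : Integrable p₁ μ) (hp₁one : ∫ ω, p₁ ω ∂μ = 1)
    (hp₁band : ∀ᵐ ω ∂μ, p'₁ ω ≤ p₁ ω ∧ p₁ ω ≤ p''₁ ω) :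
    ∫ ω in {ω | q₁ ω ≤ η * q₀ ω ∧ 0 < q₀ ω}, p₁ ω ∂μ
      ≤ ∫ ω in {ω | q₁ ω ≤ η * q₀ ω ∧ 0 < q₀ ω}, q₁ ω ∂μ := by
  have hA : MeasurableSet {ω | q₁ ω ≤ η * q₀ ω ∧ 0 < q₀ ω} :=
    (measurableSet_le hq₁m (hq₀m.const_mul η)).inter (measurableSet_lt measurable_const hq₀m)
  rcases le_or_gt c₁ (η * (1 - α * c₁)) with hη | hη
  · refine setIntegral_le_of_integral_eq_of_ae_compl_le hp₁int hq₁int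
      (hp₁one.trans hq₁one.symm) hA ?_
    filter_upwards [hfix₁, hp₁band] with ω hfix ⟨hp₁ge, _⟩ hωA
    by_contra! hlt
    exact hωA (le_mul_and_pos_of_eq_min_max_of_lt hfix (hp₁ge.trans_lt hlt)
      ((hp₁nonneg ω).trans_lt hlt) hc₁ hαc₁ hη)
  · refine setIntegral_mono_on_ae hp₁int.integrableOn hq₁int.integrableOn hA ?_
    filter_upwards [hfix₁, hp₁band] with ω hfix ⟨_, hp₁le⟩ ⟨hωη, hq₀pos⟩
    by_contra! hlt
    exact (mul_lt_of_eq_min_max_of_lt hfix (hlt.trans_le hp₁le) hq₀pos hαc₁ hη).not_ge hωη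

/-- Stochastic-dominance property of the band fixed-point density under the
alternative: `q₁` maximizes the probability of the acceptance region over its band. -/
theorem band_fixed_point_stochastic_dominance_alt {Ω : Type*} [MeasurableSpace Ω]
    (μ : Measure Ω) [SigmaFinite μ]
    (p'₁ p''₁ : Ω → ℝ)
    (hm'₁ : Measurable p'₁) (hm''₁ : Measurable p''₁)
    (h₁nonneg : ∀ ω, 0 ≤ p'₁ ω) (h₁le : ∀ ω, p'₁ ω ≤ p''₁ ω)
    (hint'₁ : Integrable p'₁ μ)
    (α c₁ : ℝ) (hα : 0 ≤ α) (hc₁ : 0 < c₁) (hαc₁ : α * c₁ ≤ 1)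
    (q₀ : Ω → ℝ) (hq₀m : Measurable q₀) (hq₀nonneg : ∀ ω, 0 ≤ q₀ ω)
    (q₁ : Ω → ℝ)
    (hq₁m : Measurable q₁) (hq₁nonneg : ∀ ω, 0 ≤ q₁ ω)
    (hq₁int : Integrable q₁ μ) (hq₁one : ∫ ω, q₁ ω ∂μ = 1)
    (hfix₁ : ∀ᵐ ω ∂μ, q₁ ω = min (p''₁ ω) (max (c₁ * (q₀ ω + α * q₁ ω)) (p'₁ ω)))
    (η : ℝ) (hη : 0 ≤ η)
    (p₁ : Ω → ℝ)
    (hp₁m : Measurable p₁) (hp₁nonneg : ∀ ω, 0 ≤ p₁ ω)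
    (hp₁int : Integrable p₁ μ) (hp₁one : ∫ ω, p₁ ω ∂μ = 1)
    (hp₁band : ∀ᵐ ω ∂μ, p'₁ ω ≤ p₁ ω ∧ p₁ ω ≤ p''₁ ω) :
    ∫ ω in {ω | q₁ ω ≤ η * q₀ ω ∧ 0 < q₀ ω}, p₁ ω ∂μ
      ≤ ∫ ω in {ω | q₁ ω ≤ η * q₀ ω ∧ 0 < q₀ ω}, q₁ ω ∂μ :=
  band_fixed_point_stochastic_dominance_alt_general μ p'₁ p''₁ α c₁ hc₁ hαc₁ q₀ hq₀m q₁ hq₁m hq₁int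
    hq₁one hfix₁ η p₁ hp₁nonneg hp₁int hp₁one hp₁band
end

section
/- (Minimax robustness of the band-model likelihood-ratio test.) Let (Ω, 𝔉, μ) be a σ-finite measure space and let p'₀, p''₀, p'₁, p''₁ : Ω → ℝ be measurable with 0 ≤ p'ᵢ ≤ p''ᵢ pointwise and p'₀, p'₁ integrable. Let α ≥ 0 and c₀, c₁ > 0 with α·c₀ ≤ 1 and α·c₁ ≤ 1, and let q₀, q₁ be μ-densities satisfying μ-a.e. the band fixed-point equations q₀ = min(p''₀, max(c₀·(α·q₀ + q₁), p'₀)) and q₁ = min(p''₁, max(c₁·(q₀ + α·q₁), p'₁)), together with the non-degeneracy condition: for μ-a.e. ω, if p''₀(ω) + p''₁(ω) > 0 then q₀(ω) + q₁(ω) > 0. Fix λ > 0 and let δ* be the indicator function of the set {ω : λ·q₁(ω) > q₀(ω)}. Then for all μ-densities p₀ ∈ [p'₀, p''₀] and p₁ ∈ [p'₁, p''₁]: ∫ δ*·p₀ dμ + λ·∫ (1 − δ*)·p₁ dμ ≤ ∫ δ*·q₀ dμ + λ·∫ (1 − δ*)·q₁ dμ, i.e. the weighted sum error probability of the likelihood-ratio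 test δ* is maximized by (q₀, q₁). -/
/-!
`q₀` is the clamp of `c₀ (α q₀ + q₁)` to the band `[p'₀, p''₀]`, so wherever the clamp is active
`q₀` sits at an edge of its band, and which edge depends only on the sign of
`c₀ q₁ - (1 - α c₀) q₀`; similarly for `q₁`. Comparing these signs with the test region
`A = {q₀ < λ q₁}` shows that, according to the position of `λ`, either `p₀ ≤ q₀` a.e. on `A` or
`q₀ ≤ p₀` a.e. off `A`. As `p₀` and `q₀` have the same mass, both alternatives give
`∫_A p₀ ≤ ∫_A q₀`. In the same way `∫_{Aᶜ} p₁ ≤ ∫_{Aᶜ} q₁`, and adding up gives the claim.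
-/

open MeasureTheory

section Clamp
variable {α : Type*} [LinearOrder α] {p q x l u : α}

theorem le_of_eq_min_max_of_lt_s10 (hq : q = min u (max x l)) (hpu : p ≤ u) (hqx : q < x) :
    p ≤ q := by
  rcases min_choice u (max x l) with h | h
  · rwa [hq, h]
  · rw [hq, h] at hqx
    exact absurd hqx (le_max_left x l).not_gt

theorem le_of_eq_min_max_of_gt_s10 (hq : q = min u (max x l)) (hlp : l ≤ p) (hxq : x < q) :
    q ≤ p := by
  have hq_le : q ≤ max x l := hq.trans_le (min_le_right _ _)
  exact (not_lt.1 fun hlq => (max_lt hxq hlq).not_ge hq_le).trans hlp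

end Clamp

section Pointwise
variable {p₀ p₁ q₀ q₁ l₀ u₀ l₁ u₁ α c₀ c₁ lam : ℝ}

theorem le_fixedPoint_null_of_reject (hq : q₀ = min u₀ (max (c₀ * (α * q₀ + q₁)) l₀))
    (hpu : p₀ ≤ u₀) (hq₀ : 0 ≤ q₀) (hc₀ : 0 < c₀) (hlam : 0 < lam)
    (hk : lam * (1 - α * c₀) ≤ c₀) (hA : q₀ < lam * q₁) : p₀ ≤ q₀ :=
  le_of_eq_min_max_of_lt_s10 hq hpu (by nlinarith)

theorem fixedPoint_alt_le_of_reject (hq : q₁ = min u₁ (max (c₁ * (q₀ + α * q₁)) l₁))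
    (hlp : l₁ ≤ p₁) (hq₁ : 0 ≤ q₁) (hc₁ : 0 < c₁)
    (hk : lam * c₁ ≤ 1 - α * c₁) (hA : q₀ < lam * q₁) : q₁ ≤ p₁ :=
  le_of_eq_min_max_of_gt_s10 hq hlp (by nlinarith)

theorem fixedPoint_null_le_of_accept (hq : q₀ = min u₀ (max (c₀ * (α * q₀ + q₁)) l₀))
    (hlp : l₀ ≤ p₀) (hp₀ : 0 ≤ p₀) (hq₀ : 0 ≤ q₀) (hc₀ : 0 < c₀) (hlam : 0 < lam)
    (hk : c₀ < lam * (1 - α * c₀)) (hAc : lam * q₁ ≤ q₀) : q₀ ≤ p₀ := by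
  rcases hq₀.eq_or_lt with h | h
  · exact h ▸ hp₀
  · exact le_of_eq_min_max_of_gt_s10 hq hlp (by nlinarith)

theorem le_fixedPoint_alt_of_accept (hq : q₁ = min u₁ (max (c₁ * (q₀ + α * q₁)) l₁))
    (hpu₀ : p₀ ≤ u₀) (hpu₁ : p₁ ≤ u₁) (hp₀ : 0 ≤ p₀) (hq₀ : 0 ≤ q₀) (hq₁ : 0 ≤ q₁)
    (hnd : 0 < u₀ + u₁ → 0 < q₀ + q₁) (hc₁ : 0 < c₁) (hlam : 0 < lam)
    (hk : 1 - α * c₁ < lam * c₁) (hAc : lam * q₁ ≤ q₀) : p₁ ≤ q₁ := by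
  rcases hq₀.eq_or_lt with h₀ | h₀
  -- here `q₀ = q₁ = 0`, and only non-degeneracy forces `p₁ = 0`
  · have h₁ : q₁ = 0 := by nlinarith
    have hu : u₀ + u₁ ≤ 0 := not_lt.1 fun h => by linarith [hnd h]
    linarith
  refine le_of_eq_min_max_of_lt_s10 hq hpu₁ ?_
  rcases hq₁.eq_or_lt with h₁ | h₁
  · subst h₁
    nlinarith
  · nlinarith

end Pointwise

section Measure
variable {Ω : Type*} [MeasurableSpace Ω] {μ : Measure Ω}

theorem setIntegral_le_of_integral_eq {f g : Ω → ℝ} {s : Set Ω} (hs : MeasurableSet s)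
    (hf : Integrable f μ) (hg : Integrable g μ) (hfg : ∫ ω, f ω ∂μ = ∫ ω, g ω ∂μ)
    (h : (∀ᵐ ω ∂μ, ω ∈ s → f ω ≤ g ω) ∨ (∀ᵐ ω ∂μ, ω ∈ sᶜ → g ω ≤ f ω)) :
    ∫ ω in s, f ω ∂μ ≤ ∫ ω in s, g ω ∂μ := by
  rcases h with h | h
  · exact setIntegral_mono_on_ae hf.integrableOn hg.integrableOn hs h
  · have hcompl := setIntegral_mono_on_ae hg.integrableOn hf.integrableOn hs.compl h
    linarith [integral_add_compl hs hf, integral_add_compl hs hg]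

theorem integral_indicator_one_mul {s : Set Ω} (hs : MeasurableSet s) (f : Ω → ℝ) :
    ∫ ω, s.indicator (fun _ => (1 : ℝ)) ω * f ω ∂μ = ∫ ω in s, f ω ∂μ := by
  simp_rw [← Set.indicator_mul_left, one_mul]
  exact integral_indicator hs

theorem integral_one_sub_indicator_one_mul {s : Set Ω} (hs : MeasurableSet s) (f : Ω → ℝ) :
    ∫ ω, (1 - s.indicator (fun _ => (1 : ℝ)) ω) * f ω ∂μ = ∫ ω in sᶜ, f ω ∂μ := by
  rw [← integral_indicator_one_mul hs.compl]
  congr with ω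
  by_cases h : ω ∈ s <;> simp [h]

variable {p₀ p₁ q₀ q₁ p'₀ p''₀ p'₁ p''₁ : Ω → ℝ} {α c₀ c₁ lam : ℝ}

theorem ae_le_fixedPoint_null_on_reject_or_ge_off
    (hfix₀ : ∀ᵐ ω ∂μ, q₀ ω = min (p''₀ ω) (max (c₀ * (α * q₀ ω + q₁ ω)) (p'₀ ω)))
    (hp₀band : ∀ᵐ ω ∂μ, p'₀ ω ≤ p₀ ω ∧ p₀ ω ≤ p''₀ ω) (hp₀ : ∀ ω, 0 ≤ p₀ ω)
    (hq₀ : ∀ ω, 0 ≤ q₀ ω) (hc₀ : 0 < c₀) (hlam : 0 < lam) :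
    (∀ᵐ ω ∂μ, ω ∈ {ω | q₀ ω < lam * q₁ ω} → p₀ ω ≤ q₀ ω) ∨
      (∀ᵐ ω ∂μ, ω ∈ {ω | q₀ ω < lam * q₁ ω}ᶜ → q₀ ω ≤ p₀ ω) := by
  rcases le_or_gt (lam * (1 - α * c₀)) c₀ with hk | hk
  · refine .inl ?_
    filter_upwards [hfix₀, hp₀band] with ω hq hp hA
    exact le_fixedPoint_null_of_reject hq hp.2 (hq₀ ω) hc₀ hlam hk hA
  · refine .inr ?_
    filter_upwards [hfix₀, hp₀band] with ω hq hp hA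
    exact fixedPoint_null_le_of_accept hq hp.1 (hp₀ ω) (hq₀ ω) hc₀ hlam hk (not_lt.1 hA)

theorem ae_le_fixedPoint_alt_off_reject_or_ge_on
    (hfix₁ : ∀ᵐ ω ∂μ, q₁ ω = min (p''₁ ω) (max (c₁ * (q₀ ω + α * q₁ ω)) (p'₁ ω)))
    (hnd : ∀ᵐ ω ∂μ, 0 < p''₀ ω + p''₁ ω → 0 < q₀ ω + q₁ ω)
    (hp₀band : ∀ᵐ ω ∂μ, p'₀ ω ≤ p₀ ω ∧ p₀ ω ≤ p''₀ ω)
    (hp₁band : ∀ᵐ ω ∂μ, p'₁ ω ≤ p₁ ω ∧ p₁ ω ≤ p''₁ ω) (hp₀ : ∀ ω, 0 ≤ p₀ ω)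
    (hq₀ : ∀ ω, 0 ≤ q₀ ω) (hq₁ : ∀ ω, 0 ≤ q₁ ω) (hc₁ : 0 < c₁) (hlam : 0 < lam) :
    (∀ᵐ ω ∂μ, ω ∈ {ω | q₀ ω < lam * q₁ ω}ᶜ → p₁ ω ≤ q₁ ω) ∨
      (∀ᵐ ω ∂μ, ω ∈ {ω | q₀ ω < lam * q₁ ω}ᶜᶜ → q₁ ω ≤ p₁ ω) := by
  rcases lt_or_ge (1 - α * c₁) (lam * c₁) with hk | hk
  · refine .inl ?_
    filter_upwards [hfix₁, hnd, hp₀band, hp₁band] with ω hq hndω hp₀ω hp₁ω hA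
    exact le_fixedPoint_alt_of_accept hq hp₀ω.2 hp₁ω.2 (hp₀ ω) (hq₀ ω) (hq₁ ω) hndω hc₁ hlam hk
      (not_lt.1 hA)
  · refine .inr ?_
    filter_upwards [hfix₁, hp₁band] with ω hq hp hA
    exact fixedPoint_alt_le_of_reject hq hp.1 (hq₁ ω) hc₁ hk (not_not.1 hA)

end Measure

theorem band_lrt_minimax_general {Ω : Type*} [MeasurableSpace Ω]
    (μ : Measure Ω)
    (p'₀ p''₀ p'₁ p''₁ : Ω → ℝ)
    (α c₀ c₁ : ℝ) (hc₀ : 0 < c₀) (hc₁ : 0 < c₁)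
    (q₀ q₁ : Ω → ℝ)
    (hq₀m : Measurable q₀) (hq₀nonneg : ∀ ω, 0 ≤ q₀ ω)
    (hq₀int : Integrable q₀ μ) (hq₀one : ∫ ω, q₀ ω ∂μ = 1)
    (hq₁m : Measurable q₁) (hq₁nonneg : ∀ ω, 0 ≤ q₁ ω)
    (hq₁int : Integrable q₁ μ) (hq₁one : ∫ ω, q₁ ω ∂μ = 1)
    (hfix₀ : ∀ᵐ ω ∂μ, q₀ ω = min (p''₀ ω) (max (c₀ * (α * q₀ ω + q₁ ω)) (p'₀ ω)))
    (hfix₁ : ∀ᵐ ω ∂μ, q₁ ω = min (p''₁ ω) (max (c₁ * (q₀ ω + α * q₁ ω)) (p'₁ ω)))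
    (hnondeg : ∀ᵐ ω ∂μ, 0 < p''₀ ω + p''₁ ω → 0 < q₀ ω + q₁ ω)
    (lam : ℝ) (hlam : 0 < lam)
    (δstar : Ω → ℝ)
    (hδstar : δstar = Set.indicator {ω | q₀ ω < lam * q₁ ω} (fun _ => (1 : ℝ)))
    (p₀ p₁ : Ω → ℝ)
    (hp₀nonneg : ∀ ω, 0 ≤ p₀ ω)
    (hp₀int : Integrable p₀ μ) (hp₀one : ∫ ω, p₀ ω ∂μ = 1)
    (hp₀band : ∀ᵐ ω ∂μ, p'₀ ω ≤ p₀ ω ∧ p₀ ω ≤ p''₀ ω)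
    (hp₁int : Integrable p₁ μ) (hp₁one : ∫ ω, p₁ ω ∂μ = 1)
    (hp₁band : ∀ᵐ ω ∂μ, p'₁ ω ≤ p₁ ω ∧ p₁ ω ≤ p''₁ ω) :
    ∫ ω, δstar ω * p₀ ω ∂μ + lam * ∫ ω, (1 - δstar ω) * p₁ ω ∂μ
      ≤ ∫ ω, δstar ω * q₀ ω ∂μ + lam * ∫ ω, (1 - δstar ω) * q₁ ω ∂μ := by
  have hA : MeasurableSet {ω | q₀ ω < lam * q₁ ω} := measurableSet_lt hq₀m (hq₁m.const_mul lam)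
  have h₀ := setIntegral_le_of_integral_eq hA hp₀int hq₀int (hp₀one.trans hq₀one.symm)
    (ae_le_fixedPoint_null_on_reject_or_ge_off hfix₀ hp₀band hp₀nonneg hq₀nonneg hc₀ hlam)
  have h₁ := setIntegral_le_of_integral_eq hA.compl hp₁int hq₁int (hp₁one.trans hq₁one.symm)
    (ae_le_fixedPoint_alt_off_reject_or_ge_on hfix₁ hnondeg hp₀band hp₁band hp₀nonneg hq₀nonneg
      hq₁nonneg hc₁ hlam)
  simp only [hδstar, integral_indicator_one_mul hA, integral_one_sub_indicator_one_mul hA]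
  gcongr

/-- Minimax robustness of the band-model likelihood-ratio test: the weighted sum error
probability of the test `δ* = 𝟙{λ q₁ > q₀}` is maximized over the bands by `(q₀, q₁)`. -/
theorem band_lrt_minimax {Ω : Type*} [MeasurableSpace Ω]
    (μ : Measure Ω) [SigmaFinite μ]
    (p'₀ p''₀ p'₁ p''₁ : Ω → ℝ)
    (hm'₀ : Measurable p'₀) (hm''₀ : Measurable p''₀)
    (hm'₁ : Measurable p'₁) (hm''₁ : Measurable p''₁)
    (h₀nonneg : ∀ ω, 0 ≤ p'₀ ω) (h₀le : ∀ ω, p'₀ ω ≤ p''₀ ω)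
    (h₁nonneg : ∀ ω, 0 ≤ p'₁ ω) (h₁le : ∀ ω, p'₁ ω ≤ p''₁ ω)
    (hint'₀ : Integrable p'₀ μ) (hint'₁ : Integrable p'₁ μ)
    (α c₀ c₁ : ℝ) (hα : 0 ≤ α) (hc₀ : 0 < c₀) (hc₁ : 0 < c₁)
    (hαc₀ : α * c₀ ≤ 1) (hαc₁ : α * c₁ ≤ 1)
    (q₀ q₁ : Ω → ℝ)
    (hq₀m : Measurable q₀) (hq₀nonneg : ∀ ω, 0 ≤ q₀ ω)
    (hq₀int : Integrable q₀ μ) (hq₀one : ∫ ω, q₀ ω ∂μ = 1)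
    (hq₁m : Measurable q₁) (hq₁nonneg : ∀ ω, 0 ≤ q₁ ω)
    (hq₁int : Integrable q₁ μ) (hq₁one : ∫ ω, q₁ ω ∂μ = 1)
    (hfix₀ : ∀ᵐ ω ∂μ, q₀ ω = min (p''₀ ω) (max (c₀ * (α * q₀ ω + q₁ ω)) (p'₀ ω)))
    (hfix₁ : ∀ᵐ ω ∂μ, q₁ ω = min (p''₁ ω) (max (c₁ * (q₀ ω + α * q₁ ω)) (p'₁ ω)))
    (hnondeg : ∀ᵐ ω ∂μ, 0 < p''₀ ω + p''₁ ω → 0 < q₀ ω + q₁ ω)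
    (lam : ℝ) (hlam : 0 < lam)
    (δstar : Ω → ℝ)
    (hδstar : δstar = Set.indicator {ω | q₀ ω < lam * q₁ ω} (fun _ => (1 : ℝ)))
    (p₀ p₁ : Ω → ℝ)
    (hp₀m : Measurable p₀) (hp₀nonneg : ∀ ω, 0 ≤ p₀ ω)
    (hp₀int : Integrable p₀ μ) (hp₀one : ∫ ω, p₀ ω ∂μ = 1)
    (hp₀band : ∀ᵐ ω ∂μ, p'₀ ω ≤ p₀ ω ∧ p₀ ω ≤ p''₀ ω)
    (hp₁m : Measurable p₁) (hp₁nonneg : ∀ ω, 0 ≤ p₁ ω)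
    (hp₁int : Integrable p₁ μ) (hp₁one : ∫ ω, p₁ ω ∂μ = 1)
    (hp₁band : ∀ᵐ ω ∂μ, p'₁ ω ≤ p₁ ω ∧ p₁ ω ≤ p''₁ ω) :
    ∫ ω, δstar ω * p₀ ω ∂μ + lam * ∫ ω, (1 - δstar ω) * p₁ ω ∂μ
      ≤ ∫ ω, δstar ω * q₀ ω ∂μ + lam * ∫ ω, (1 - δstar ω) * q₁ ω ∂μ :=
  band_lrt_minimax_general μ p'₀ p''₀ p'₁ p''₁ α c₀ c₁ hc₀ hc₁ q₀ q₁ hq₀m hq₀nonneg hq₀int hq₀one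
    hq₁m hq₁nonneg hq₁int hq₁one hfix₀ hfix₁ hnondeg lam hlam δstar hδstar p₀ p₁ hp₀nonneg hp₀int
    hp₀one hp₀band hp₁int hp₁one hp₁band
end

section
/- (Monotonicity and Lipschitz continuity of the normalization function g.) Let (Ω, 𝔉, μ) be a σ-finite measure space, let p', p'' : Ω → ℝ be measurable with 0 ≤ p' ≤ p'' pointwise and p' integrable, and let p : Ω → ℝ be nonnegative, measurable and integrable. Define g(c) = ∫ min(p'', max(c·p, p')) dμ for c ≥ 0. Then g is real-valued and nondecreasing on [0, ∞), and for all 0 ≤ c ≤ d: g(d) − g(c) ≤ (d − c)·∫ p dμ; in particular g is Lipschitz continuous on [0, ∞). -/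
/-!
The map `x ↦ min b (max x a)` is monotone and 1-Lipschitz, so for `p ≥ 0` the integrand
`min p'' (max (c p) p')` is nondecreasing in `c` and grows by at most `(d - c) p` from `c` to `d`;
integrating gives both claims. Integrability holds because the integrand lies between `p'` and
`max (c p) p'`.
-/

open MeasureTheory

theorem min_max_sub_min_max_le {α : Type*} [LinearOrder α] [AddCommGroup α] [IsOrderedAddMonoid α]
    (a b : α) {x y : α} (hxy : x ≤ y) :
    min b (max y a) - min b (max x a) ≤ y - x :=
  calc min b (max y a) - min b (max x a) ≤ |min b (max y a) - min b (max x a)| := le_abs_self _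
    _ ≤ |max y a - max x a| := by simpa using abs_min_sub_min_le_max b (max y a) b (max x a)
    _ ≤ |y - x| := abs_max_sub_max_le_abs y x a
    _ = y - x := abs_of_nonneg (sub_nonneg.2 hxy)

theorem Monotone.lipschitzWith_of_sub_le {f : ℝ → ℝ} {K : ℝ} (hf : Monotone f) (hK : 0 ≤ K)
    (h : ∀ x y, x ≤ y → f y - f x ≤ (y - x) * K) : LipschitzWith K.toNNReal f := by
  refine LipschitzWith.of_le_add_mul' K fun x y => ?_
  rw [Real.dist_eq]
  rcases le_total x y with hxy | hyx
  · linarith [hf hxy, mul_nonneg hK (abs_nonneg (x - y))]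
  · rw [abs_of_nonneg (sub_nonneg.2 hyx)]
    linarith [h y x hyx]

section ClampIntegral

variable {Ω : Type*} [MeasurableSpace Ω] {μ : Measure Ω} {a b q : Ω → ℝ}

theorem integrable_min_max_mul (hb : AEStronglyMeasurable b μ) (ha : Integrable a μ)
    (hq : Integrable q μ) (hab : ∀ ω, a ω ≤ b ω) (c : ℝ) :
    Integrable (fun ω => min (b ω) (max (c * q ω) (a ω))) μ :=
  integrable_of_le_of_le (by fun_prop)
    (ae_of_all _ fun ω => le_min (hab ω) (le_max_right _ _))
    (ae_of_all _ fun ω => min_le_right _ _) ha ((hq.const_mul c).sup ha)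

theorem monotone_integral_min_max_mul (hb : AEStronglyMeasurable b μ) (ha : Integrable a μ)
    (hq : Integrable q μ) (hab : ∀ ω, a ω ≤ b ω) (hq₀ : ∀ ω, 0 ≤ q ω) :
    Monotone fun c => ∫ ω, min (b ω) (max (c * q ω) (a ω)) ∂μ := fun c d hcd =>
  integral_mono (integrable_min_max_mul hb ha hq hab c) (integrable_min_max_mul hb ha hq hab d)
    fun ω => min_le_min_left _ (max_le_max_right _ (mul_le_mul_of_nonneg_right hcd (hq₀ ω)))

theorem integral_min_max_mul_sub_le (hb : AEStronglyMeasurable b μ) (ha : Integrable a μ)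
    (hq : Integrable q μ) (hab : ∀ ω, a ω ≤ b ω) (hq₀ : ∀ ω, 0 ≤ q ω) {c d : ℝ} (hcd : c ≤ d) :
    ∫ ω, min (b ω) (max (d * q ω) (a ω)) ∂μ - ∫ ω, min (b ω) (max (c * q ω) (a ω)) ∂μ
      ≤ (d - c) * ∫ ω, q ω ∂μ := by
  have hc := integrable_min_max_mul hb ha hq hab c
  have hd := integrable_min_max_mul hb ha hq hab d
  rw [← integral_sub hd hc, ← integral_const_mul]
  refine integral_mono (hd.sub hc) (hq.const_mul _) fun ω => ?_
  calc _ ≤ d * q ω - c * q ω :=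
        min_max_sub_min_max_le _ _ (mul_le_mul_of_nonneg_right hcd (hq₀ ω))
    _ = (d - c) * q ω := by ring

end ClampIntegral

theorem band_normalization_monotone_lipschitz_general {Ω : Type*} [MeasurableSpace Ω]
    (μ : Measure Ω)
    (p' p'' p : Ω → ℝ)
    (hm'' : Measurable p'')
    (hle : ∀ ω, p' ω ≤ p'' ω)
    (hint' : Integrable p' μ)
    (hpnonneg : ∀ ω, 0 ≤ p ω) (hpint : Integrable p μ)
    (g : ℝ → ℝ)
    (hg : ∀ c, g c = ∫ ω, min (p'' ω) (max (c * p ω) (p' ω)) ∂μ) :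
    (∀ c, 0 ≤ c → Integrable (fun ω => min (p'' ω) (max (c * p ω) (p' ω))) μ)
    ∧ MonotoneOn g (Set.Ici 0)
    ∧ (∀ c d, 0 ≤ c → c ≤ d → g d - g c ≤ (d - c) * ∫ ω, p ω ∂μ)
    ∧ LipschitzOnWith (∫ ω, p ω ∂μ).toNNReal g (Set.Ici 0) := by
  obtain rfl : g = fun c => ∫ ω, min (p'' ω) (max (c * p ω) (p' ω)) ∂μ := funext hg
  have hb : AEStronglyMeasurable p'' μ := hm''.aestronglyMeasurable
  have hmono := monotone_integral_min_max_mul hb hint' hpint hle hpnonneg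
  have hsub := fun c d (hcd : c ≤ d) => integral_min_max_mul_sub_le hb hint' hpint hle hpnonneg hcd
  refine ⟨fun c _ => integrable_min_max_mul hb hint' hpint hle c, hmono.monotoneOn _,
    fun c d _ => hsub c d, ?_⟩
  exact (hmono.lipschitzWith_of_sub_le (integral_nonneg hpnonneg) hsub).lipschitzOnWith

/-- Monotonicity and Lipschitz continuity of the normalization function
`g(c) = ∫ min(p'', max(c·p, p')) dμ` on `[0, ∞)`. -/
theorem band_normalization_monotone_lipschitz {Ω : Type*} [MeasurableSpace Ω]
    (μ : Measure Ω) [SigmaFinite μ]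
    (p' p'' p : Ω → ℝ)
    (hm' : Measurable p') (hm'' : Measurable p'') (hmp : Measurable p)
    (hnonneg : ∀ ω, 0 ≤ p' ω) (hle : ∀ ω, p' ω ≤ p'' ω)
    (hint' : Integrable p' μ)
    (hpnonneg : ∀ ω, 0 ≤ p ω) (hpint : Integrable p μ)
    (g : ℝ → ℝ)
    (hg : ∀ c, g c = ∫ ω, min (p'' ω) (max (c * p ω) (p' ω)) ∂μ) :
    (∀ c, 0 ≤ c → Integrable (fun ω => min (p'' ω) (max (c * p ω) (p' ω))) μ)
    ∧ MonotoneOn g (Set.Ici 0)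
    ∧ (∀ c d, 0 ≤ c → c ≤ d → g d - g c ≤ (d - c) * ∫ ω, p ω ∂μ)
    ∧ LipschitzOnWith (∫ ω, p ω ∂μ).toNNReal g (Set.Ici 0) :=
  band_normalization_monotone_lipschitz_general μ p' p'' p hm'' hle hint' hpnonneg hpint g hg
end

section
/- (Lemma 1, existence of the normalizing constant.) Let (Ω, 𝔉, μ) be a σ-finite measure space, let p'₀, p''₀ : Ω → ℝ be measurable with 0 ≤ p'₀ ≤ p''₀ pointwise, p'₀ integrable and ∫ p'₀ dμ < 1. Let α > 0, let p₀ be a μ-density with p'₀ ≤ p₀ ≤ p''₀ μ-a.e., and let p₁ be a μ-density. Then there exists c with 0 < c ≤ 1/α such that ∫ min(p''₀, max(c·(α·p₀ + p₁), p'₀)) dμ = 1. -/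
/-!
For `c ≥ 0` put `G c = ∫ min(p''₀, max(c·(α·p₀ + p₁), p'₀)) dμ`. Clamping `x ↦ min b (max x a)` is
1-Lipschitz, so `G` is Lipschitz with constant `∫ |α·p₀ + p₁| dμ`, in particular continuous.
At `c = 0` the integrand is `p'₀`, so `G 0 = ∫ p'₀ dμ < 1`; at `c = 1/α` it dominates `p₀` a.e.
(because `(α·p₀ + p₁)/α ≥ p₀` and `p₀ ≤ p''₀`), so `G (1/α) ≥ 1`. The intermediate value theorem
gives `c ∈ (0, 1/α]` with `G c = 1`.
-/

open MeasureTheory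

lemma abs_min_max_sub_min_max_le (a b x y : ℝ) :
    |min b (max x a) - min b (max y a)| ≤ |x - y| :=
  calc |min b (max x a) - min b (max y a)|
      ≤ max |b - b| |max x a - max y a| := abs_min_sub_min_le_max _ _ _ _
    _ = |max x a - max y a| := by simp
    _ ≤ |x - y| := abs_max_sub_max_le_abs _ _ _

lemma abs_min_max_le {a b : ℝ} (hab : a ≤ b) (x : ℝ) : |min b (max x a)| ≤ |x - a| + |a| :=
  calc |min b (max x a)| ≤ |min b (max x a) - min b (max a a)| + |a| := by
        simpa [min_eq_right hab] using abs_sub_abs_le_abs_sub (min b (max x a)) a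
    _ ≤ |x - a| + |a| := add_le_add (abs_min_max_sub_min_max_le a b x a) le_rfl

section ClampedIntegral

variable {Ω : Type*} [MeasurableSpace Ω] {μ : Measure Ω} {lo hi s : Ω → ℝ}

lemma integrable_min_max_mul_s13 (hlo : Integrable lo μ) (hhi : AEStronglyMeasurable hi μ)
    (hle : lo ≤ᵐ[μ] hi) (hs : Integrable s μ) (c : ℝ) :
    Integrable (fun ω => min (hi ω) (max (c * s ω) (lo ω))) μ := by
  refine (((hs.const_mul c).sub hlo).abs.add hlo.abs).mono'
    (hhi.inf ((hs.aestronglyMeasurable.const_mul c).sup hlo.aestronglyMeasurable)) ?_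
  filter_upwards [hle] with ω hω
  exact abs_min_max_le hω _

lemma lipschitzWith_integral_min_max_mul (hlo : Integrable lo μ)
    (hhi : AEStronglyMeasurable hi μ) (hle : lo ≤ᵐ[μ] hi) (hs : Integrable s μ) :
    LipschitzWith (∫ ω, |s ω| ∂μ).toNNReal
      (fun c => ∫ ω, min (hi ω) (max (c * s ω) (lo ω)) ∂μ) := by
  have hG := integrable_min_max_mul_s13 hlo hhi hle hs
  refine LipschitzWith.of_dist_le_mul fun c c' => ?_
  calc dist _ _ = ‖∫ ω, (min (hi ω) (max (c * s ω) (lo ω))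
        - min (hi ω) (max (c' * s ω) (lo ω))) ∂μ‖ := by
        rw [dist_eq_norm, integral_sub (hG c) (hG c')]
    _ ≤ ∫ ω, |c - c'| * |s ω| ∂μ := by
        refine norm_integral_le_of_norm_le (hs.abs.const_mul _) (.of_forall fun ω => ?_)
        calc _ ≤ |c * s ω - c' * s ω| := abs_min_max_sub_min_max_le _ _ _ _
          _ = |c - c'| * |s ω| := by rw [← sub_mul, abs_mul]
    _ = _ := by
        rw [integral_const_mul, mul_comm, Real.dist_eq,
          Real.coe_toNNReal _ (integral_nonneg fun ω => abs_nonneg (s ω))]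

end ClampedIntegral

theorem band_normalizing_constant_exists_general {Ω : Type*} [MeasurableSpace Ω]
    (μ : Measure Ω)
    (p'₀ p''₀ : Ω → ℝ)
    (hm''₀ : Measurable p''₀)
    (h₀nonneg : ∀ ω, 0 ≤ p'₀ ω) (h₀le : ∀ ω, p'₀ ω ≤ p''₀ ω)
    (hint'₀ : Integrable p'₀ μ) (hmass : ∫ ω, p'₀ ω ∂μ < 1)
    (α : ℝ) (hα : 0 < α)
    (p₀ : Ω → ℝ)
    (hp₀int : Integrable p₀ μ) (hp₀one : ∫ ω, p₀ ω ∂μ = 1)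
    (hp₀band : ∀ᵐ ω ∂μ, p'₀ ω ≤ p₀ ω ∧ p₀ ω ≤ p''₀ ω)
    (p₁ : Ω → ℝ)
    (hp₁nonneg : ∀ ω, 0 ≤ p₁ ω)
    (hp₁int : Integrable p₁ μ) :
    ∃ c : ℝ, 0 < c ∧ c ≤ 1 / α ∧
      ∫ ω, min (p''₀ ω) (max (c * (α * p₀ ω + p₁ ω)) (p'₀ ω)) ∂μ = 1 := by
  have hs : Integrable (fun ω => α * p₀ ω + p₁ ω) μ := (hp₀int.const_mul α).add hp₁int
  have hle : p'₀ ≤ᵐ[μ] p''₀ := .of_forall h₀le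
  set G : ℝ → ℝ := fun c => ∫ ω, min (p''₀ ω) (max (c * (α * p₀ ω + p₁ ω)) (p'₀ ω)) ∂μ
  have hG_cont : Continuous G :=
    (lipschitzWith_integral_min_max_mul hint'₀ hm''₀.aestronglyMeasurable hle hs).continuous
  have hG_zero : G 0 = ∫ ω, p'₀ ω ∂μ := by
    simp only [G, zero_mul, max_eq_right (h₀nonneg _), min_eq_right (h₀le _)]
  have hG_inv : 1 ≤ G (1 / α) := by
    refine hp₀one.symm.le.trans (integral_mono_ae hp₀int
      (integrable_min_max_mul_s13 hint'₀ hm''₀.aestronglyMeasurable hle hs _) ?_)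
    filter_upwards [hp₀band] with ω hω
    have hdom : p₀ ω ≤ 1 / α * (α * p₀ ω + p₁ ω) := by
      rw [mul_add, one_div, inv_mul_cancel_left₀ hα.ne']
      exact le_add_of_nonneg_right (mul_nonneg (inv_nonneg.2 hα.le) (hp₁nonneg ω))
    exact le_min hω.2 (le_max_of_le_left hdom)
  obtain ⟨c, ⟨hc_nonneg, hc_le⟩, hGc⟩ :=
    intermediate_value_Icc (by positivity) hG_cont.continuousOn ⟨hG_zero ▸ hmass.le, hG_inv⟩
  refine ⟨c, hc_nonneg.lt_of_ne ?_, hc_le, hGc⟩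
  rintro rfl
  exact hmass.ne (hG_zero ▸ hGc)

/-- Lemma 1: existence of the normalizing constant `c ∈ (0, 1/α]` with
`∫ min(p''₀, max(c·(α·p₀ + p₁), p'₀)) dμ = 1`. -/
theorem band_normalizing_constant_exists {Ω : Type*} [MeasurableSpace Ω]
    (μ : Measure Ω) [SigmaFinite μ]
    (p'₀ p''₀ : Ω → ℝ)
    (hm'₀ : Measurable p'₀) (hm''₀ : Measurable p''₀)
    (h₀nonneg : ∀ ω, 0 ≤ p'₀ ω) (h₀le : ∀ ω, p'₀ ω ≤ p''₀ ω)
    (hint'₀ : Integrable p'₀ μ) (hmass : ∫ ω, p'₀ ω ∂μ < 1)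
    (α : ℝ) (hα : 0 < α)
    (p₀ : Ω → ℝ)
    (hp₀m : Measurable p₀) (hp₀nonneg : ∀ ω, 0 ≤ p₀ ω)
    (hp₀int : Integrable p₀ μ) (hp₀one : ∫ ω, p₀ ω ∂μ = 1)
    (hp₀band : ∀ᵐ ω ∂μ, p'₀ ω ≤ p₀ ω ∧ p₀ ω ≤ p''₀ ω)
    (p₁ : Ω → ℝ)
    (hp₁m : Measurable p₁) (hp₁nonneg : ∀ ω, 0 ≤ p₁ ω)
    (hp₁int : Integrable p₁ μ) (hp₁one : ∫ ω, p₁ ω ∂μ = 1) :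
    ∃ c : ℝ, 0 < c ∧ c ≤ 1 / α ∧
      ∫ ω, min (p''₀ ω) (max (c * (α * p₀ ω + p₁ ω)) (p'₀ ω)) ∂μ = 1 :=
  band_normalizing_constant_exists_general μ p'₀ p''₀ hm''₀ h₀nonneg h₀le hint'₀ hmass α hα p₀
    hp₀int hp₀one hp₀band p₁ hp₁nonneg hp₁int
end

section
/- (Key contraction inequality in the convergence proof of Algorithm 1 for α > 0.) Let (Ω, 𝔉, μ) be a σ-finite measure space, let π ∈ (0, 1), and let r₀, r₁, q₀, q₁ : Ω → ℝ be integrable. Suppose the two L¹ minimality inequalities hold: ∫ |q₀ − (π·r₀ + (1 − π)·r₁)| dμ ≤ ∫ |r₀ − (π·r₀ + (1 − π)·r₁)| dμ and ∫ |q₁ − (π·q₀ + (1 − π)·r₁)| dμ ≤ ∫ |r₁ − (π·q₀ + (1 − π)·r₁)| dμ. Then ∫ |q₀ − q₁| dμ ≤ ∫ |r₀ − r₁| dμ. -/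
/-! In any normed space, if `q` is at least as close as `x` to the point `m = a x + b y` of the
segment `[x, y]`, then `‖q - y‖ ≤ ‖q - m‖ + a ‖x - y‖ ≤ ‖x - m‖ + a ‖x - y‖ = ‖x - y‖`.
In `L¹(μ)` the two hypotheses are instances of this, giving `‖q₀ - r₁‖ ≤ ‖r₀ - r₁‖` and
`‖q₁ - q₀‖ ≤ ‖r₁ - q₀‖`, which chain. -/

open MeasureTheory

theorem norm_sub_le_of_norm_sub_convexCombination_le {E : Type*} [SeminormedAddCommGroup E]
    [NormedSpace ℝ E] {a b : ℝ} (ha : 0 ≤ a) (hb : 0 ≤ b) (hab : a + b = 1) {q x y : E}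
    (h : ‖q - (a • x + b • y)‖ ≤ ‖x - (a • x + b • y)‖) : ‖q - y‖ ≤ ‖x - y‖ := by
  obtain rfl : a = 1 - b := eq_sub_of_add_eq hab
  have hx : x - ((1 - b) • x + b • y) = b • (x - y) := by module
  calc ‖q - y‖ = ‖(q - ((1 - b) • x + b • y)) + (1 - b) • (x - y)‖ := by congr 1; module
    _ ≤ ‖q - ((1 - b) • x + b • y)‖ + (1 - b) * ‖x - y‖ := by
        grw [norm_add_le, norm_smul, Real.norm_of_nonneg ha]
    _ ≤ b * ‖x - y‖ + (1 - b) * ‖x - y‖ := by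
        grw [h, hx, norm_smul, Real.norm_of_nonneg hb]
    _ = ‖x - y‖ := by ring

section L1

variable {Ω : Type*} [MeasurableSpace Ω] {μ : Measure Ω} {f g h : Ω → ℝ}

theorem integral_abs_sub_eq_norm_toL1_sub (hf : Integrable f μ) (hg : Integrable g μ) :
    ∫ ω, |f ω - g ω| ∂μ = ‖hf.toL1 f - hg.toL1 g‖ := by
  rw [← Integrable.toL1_sub, L1.norm_of_fun_eq_integral_norm]
  rfl

theorem integral_abs_sub_linearCombination_eq_norm_toL1 (hf : Integrable f μ)
    (hg : Integrable g μ) (hh : Integrable h μ) (a b : ℝ) :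
    ∫ ω, |f ω - (a * g ω + b * h ω)| ∂μ = ‖hf.toL1 f - (a • hg.toL1 g + b • hh.toL1 h)‖ :=
  integral_abs_sub_eq_norm_toL1_sub hf ((hg.const_mul a).add (hh.const_mul b))

end L1

theorem algorithm_contraction_general {Ω : Type*} [MeasurableSpace Ω]
    (μ : Measure Ω)
    (π : ℝ) (hπ : π ∈ Set.Ioo (0 : ℝ) 1)
    (r₀ r₁ q₀ q₁ : Ω → ℝ)
    (hr₀ : Integrable r₀ μ) (hr₁ : Integrable r₁ μ)
    (hq₀ : Integrable q₀ μ) (hq₁ : Integrable q₁ μ)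
    (hmin₀ : ∫ ω, |q₀ ω - (π * r₀ ω + (1 - π) * r₁ ω)| ∂μ
            ≤ ∫ ω, |r₀ ω - (π * r₀ ω + (1 - π) * r₁ ω)| ∂μ)
    (hmin₁ : ∫ ω, |q₁ ω - (π * q₀ ω + (1 - π) * r₁ ω)| ∂μ
            ≤ ∫ ω, |r₁ ω - (π * q₀ ω + (1 - π) * r₁ ω)| ∂μ) :
    ∫ ω, |q₀ ω - q₁ ω| ∂μ ≤ ∫ ω, |r₀ ω - r₁ ω| ∂μ := by
  obtain ⟨hπ₀, hπ₁⟩ := hπ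
  simp only [integral_abs_sub_linearCombination_eq_norm_toL1 hq₀ hr₀ hr₁,
    integral_abs_sub_linearCombination_eq_norm_toL1 hr₀ hr₀ hr₁,
    integral_abs_sub_linearCombination_eq_norm_toL1 hq₁ hq₀ hr₁,
    integral_abs_sub_linearCombination_eq_norm_toL1 hr₁ hq₀ hr₁] at hmin₀ hmin₁
  rw [add_comm] at hmin₁
  have hq₀r₁ : ‖hq₀.toL1 q₀ - hr₁.toL1 r₁‖ ≤ ‖hr₀.toL1 r₀ - hr₁.toL1 r₁‖ :=
    norm_sub_le_of_norm_sub_convexCombination_le hπ₀.le (sub_nonneg.2 hπ₁.le)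
      (add_sub_cancel π 1) hmin₀
  have hq₁q₀ : ‖hq₁.toL1 q₁ - hq₀.toL1 q₀‖ ≤ ‖hr₁.toL1 r₁ - hq₀.toL1 q₀‖ :=
    norm_sub_le_of_norm_sub_convexCombination_le (sub_nonneg.2 hπ₁.le) hπ₀.le
      (sub_add_cancel 1 π) hmin₁
  rw [integral_abs_sub_eq_norm_toL1_sub hq₀ hq₁, integral_abs_sub_eq_norm_toL1_sub hr₀ hr₁,
    norm_sub_rev]
  exact hq₁q₀.trans ((norm_sub_rev _ _).trans_le hq₀r₁)

/-- Key contraction inequality in the convergence proof of Algorithm 1 for `α > 0`: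
if each new iterate is at least as close in `L¹` to the relevant convex combination as
the previous iterate, then `‖q₀ − q₁‖₁ ≤ ‖r₀ − r₁‖₁`. -/
theorem algorithm_contraction {Ω : Type*} [MeasurableSpace Ω]
    (μ : Measure Ω) [SigmaFinite μ]
    (π : ℝ) (hπ : π ∈ Set.Ioo (0 : ℝ) 1)
    (r₀ r₁ q₀ q₁ : Ω → ℝ)
    (hr₀ : Integrable r₀ μ) (hr₁ : Integrable r₁ μ)
    (hq₀ : Integrable q₀ μ) (hq₁ : Integrable q₁ μ)
    (hmin₀ : ∫ ω, |q₀ ω - (π * r₀ ω + (1 - π) * r₁ ω)| ∂μ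
            ≤ ∫ ω, |r₀ ω - (π * r₀ ω + (1 - π) * r₁ ω)| ∂μ)
    (hmin₁ : ∫ ω, |q₁ ω - (π * q₀ ω + (1 - π) * r₁ ω)| ∂μ
            ≤ ∫ ω, |r₁ ω - (π * q₀ ω + (1 - π) * r₁ ω)| ∂μ) :
    ∫ ω, |q₀ ω - q₁ ω| ∂μ ≤ ∫ ω, |r₀ ω - r₁ ω| ∂μ :=
  algorithm_contraction_general μ π hπ r₀ r₁ q₀ q₁ hr₀ hr₁ hq₀ hq₁ hmin₀ hmin₁
end

section
/- (Corollary 1 for the total variation distance: the band fixed-point formula gives the L¹ projection onto a density band.) Let (Ω, 𝔉, μ) be a σ-finite measure space, let q', q'' : Ω → ℝ be measurable with 0 ≤ q' ≤ q'' pointwise and q' integrable, let p be a μ-density and let c > 0. Suppose the function q* = min(q'', max(c·p, q')) satisfies ∫ q* dμ = 1. Then for every μ-density q with q' ≤ q ≤ q'' μ-a.e.: ∫ |p − q*| dμ ≤ ∫ |p − q| dμ. -/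
/-!
Write `|x| = 2 max x 0 - x`. Since `∫ q* = ∫ q`, it suffices to compare the positive parts of
`p - q*` and `p - q` (or, symmetrically, the negative parts). If `c ≥ 1`, then `q* < p ≤ c p`
forces the clip at the upper envelope, `q* = q'' ≥ q`; if `c ≤ 1`, then `q* > p ≥ c p` forces
`q* ≤ q' ≤ q`. In either case the relevant part of `p - q*` is pointwise dominated by that of
`p - q`.
-/

open MeasureTheory

lemma abs_sub_add_sub_le_abs_sub {a b d : ℝ} (h : b < a → d ≤ b) :
    |a - b| + (d - b) ≤ |a - d| := by
  rcases lt_or_ge b a with hba | hab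
  · rw [abs_of_pos (sub_pos.2 hba), abs_of_nonneg (by linarith [h hba])]
    linarith [h hba]
  · rw [abs_of_nonpos (sub_nonpos.2 hab)]
    linarith [neg_abs_le (a - d)]

lemma le_min_max_of_min_max_lt {lo hi a x y : ℝ} (hy : y ≤ hi)
    (h : min hi (max a lo) < x) (hxa : x ≤ a) : y ≤ min hi (max a lo) := by
  grind

lemma min_max_le_of_lt_min_max {lo hi a x y : ℝ} (hy : lo ≤ y)
    (h : x < min hi (max a lo)) (hax : a ≤ x) : min hi (max a lo) ≤ y := by
  grind

section

variable {Ω : Type*} [MeasurableSpace Ω] {μ : Measure Ω} {f g h : Ω → ℝ}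

lemma integral_abs_sub_le_of_ae_lt_imp_le (hf : Integrable f μ) (hg : Integrable g μ)
    (hh : Integrable h μ) (hgh : ∫ ω, g ω ∂μ = ∫ ω, h ω ∂μ)
    (hpt : ∀ᵐ ω ∂μ, g ω < f ω → h ω ≤ g ω) :
    ∫ ω, |f ω - g ω| ∂μ ≤ ∫ ω, |f ω - h ω| ∂μ := by
  have hfg : Integrable (fun ω => |f ω - g ω|) μ := (hf.sub hg).abs
  have hhg : Integrable (fun ω => h ω - g ω) μ := hh.sub hg
  calc ∫ ω, |f ω - g ω| ∂μ = ∫ ω, (|f ω - g ω| + (h ω - g ω)) ∂μ := by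
        rw [integral_add hfg hhg, integral_sub hh hg, hgh, sub_self, add_zero]
    _ ≤ ∫ ω, |f ω - h ω| ∂μ :=
        integral_mono_ae (hfg.add hhg) (hf.sub hh).abs
          (hpt.mono fun _ => abs_sub_add_sub_le_abs_sub)

lemma integral_abs_sub_le_of_ae_gt_imp_ge (hf : Integrable f μ) (hg : Integrable g μ)
    (hh : Integrable h μ) (hgh : ∫ ω, g ω ∂μ = ∫ ω, h ω ∂μ)
    (hpt : ∀ᵐ ω ∂μ, f ω < g ω → g ω ≤ h ω) :
    ∫ ω, |f ω - g ω| ∂μ ≤ ∫ ω, |f ω - h ω| ∂μ := by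
  have hneg := integral_abs_sub_le_of_ae_lt_imp_le (f := -f) (g := -g) (h := -h) hf.neg hg.neg
    hh.neg (by simp only [Pi.neg_apply, integral_neg, hgh])
    (hpt.mono fun _ hω hlt => neg_le_neg (hω (neg_lt_neg_iff.1 hlt)))
  simpa only [Pi.neg_apply, ← neg_sub', abs_neg] using hneg

end

theorem band_projection_L1_general {Ω : Type*} [MeasurableSpace Ω]
    (μ : Measure Ω)
    (q' q'' : Ω → ℝ)
    (p : Ω → ℝ)
    (hpnonneg : ∀ ω, 0 ≤ p ω)
    (hpint : Integrable p μ)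
    (c : ℝ)
    (qstar : Ω → ℝ)
    (hqstar : ∀ ω, qstar ω = min (q'' ω) (max (c * p ω) (q' ω)))
    (hqstarone : ∫ ω, qstar ω ∂μ = 1)
    (q : Ω → ℝ)
    (hqint : Integrable q μ) (hqone : ∫ ω, q ω ∂μ = 1)
    (hqband : ∀ᵐ ω ∂μ, q' ω ≤ q ω ∧ q ω ≤ q'' ω) :
    ∫ ω, |p ω - qstar ω| ∂μ ≤ ∫ ω, |p ω - q ω| ∂μ := by
  -- a non-integrable `qstar` would have Bochner integral `0`
  have hqs_int : Integrable qstar μ := .of_integral_ne_zero (by rw [hqstarone]; exact one_ne_zero)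
  have hmass : ∫ ω, qstar ω ∂μ = ∫ ω, q ω ∂μ := hqstarone.trans hqone.symm
  rcases le_total 1 c with hc | hc
  · refine integral_abs_sub_le_of_ae_lt_imp_le hpint hqs_int hqint hmass ?_
    filter_upwards [hqband] with ω hω hlt
    rw [hqstar] at hlt ⊢
    exact le_min_max_of_min_max_lt hω.2 hlt (le_mul_of_one_le_left (hpnonneg ω) hc)
  · refine integral_abs_sub_le_of_ae_gt_imp_ge hpint hqs_int hqint hmass ?_
    filter_upwards [hqband] with ω hω hlt
    rw [hqstar] at hlt ⊢
    exact min_max_le_of_lt_min_max hω.1 hlt (mul_le_of_le_one_left (hpnonneg ω) hc)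

/-- Corollary 1 for the total variation distance: the band fixed-point formula
`q* = min(q'', max(c·p, q'))` gives the `L¹` projection of `p` onto the density band. -/
theorem band_projection_L1 {Ω : Type*} [MeasurableSpace Ω]
    (μ : Measure Ω) [SigmaFinite μ]
    (q' q'' : Ω → ℝ)
    (hm' : Measurable q') (hm'' : Measurable q'')
    (hnonneg : ∀ ω, 0 ≤ q' ω) (hle : ∀ ω, q' ω ≤ q'' ω)
    (hint' : Integrable q' μ)
    (p : Ω → ℝ)
    (hpm : Measurable p) (hpnonneg : ∀ ω, 0 ≤ p ω)
    (hpint : Integrable p μ) (hpone : ∫ ω, p ω ∂μ = 1)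
    (c : ℝ) (hc : 0 < c)
    (qstar : Ω → ℝ)
    (hqstar : ∀ ω, qstar ω = min (q'' ω) (max (c * p ω) (q' ω)))
    (hqstarone : ∫ ω, qstar ω ∂μ = 1)
    (q : Ω → ℝ)
    (hqm : Measurable q) (hqnonneg : ∀ ω, 0 ≤ q ω)
    (hqint : Integrable q μ) (hqone : ∫ ω, q ω ∂μ = 1)
    (hqband : ∀ᵐ ω ∂μ, q' ω ≤ q ω ∧ q ω ≤ q'' ω) :
    ∫ ω, |p ω - qstar ω| ∂μ ≤ ∫ ω, |p ω - q ω| ∂μ :=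
  band_projection_L1_general μ q' q'' p hpnonneg hpint c qstar hqstar hqstarone q hqint hqone hqband
end

section
/- (Corollary 1: the band fixed-point formula jointly minimizes all f-divergences to a fixed density.) Let (Ω, 𝔉, μ) be a σ-finite measure space, let q', q'' : Ω → ℝ be measurable with 0 < q' ≤ q'' μ-a.e. and q' integrable, let p be a μ-density and let c > 0. Suppose q* = min(q'', max(c·p, q')) satisfies ∫ q* dμ = 1. Then for every convex function f : [0, ∞) → ℝ and every μ-density q with q' ≤ q ≤ q'' μ-a.e. such that both ω ↦ q(ω)·f(p(ω)/q(ω)) and ω ↦ q*(ω)·f(p(ω)/q*(ω)) are μ-integrable: ∫ q*·f(p/q*) dμ ≤ ∫ q·f(p/q) dμ; that is, q* minimizes the f-divergence D_f(P‖Q) = ∫ q·f(p/q) dμ over the density band [q', q''] simultaneously for all convex f. -/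
open MeasureTheory Set

/-!
Let `k` be a subgradient of `f` at `1/c` (its right derivative) and `ν = f(1/c) - k/c`.
For fixed `P ≥ 0` the function `Q ↦ Q f(P/Q) - ν Q` is convex on `(0, ∞)` (a perspective minus
a linear term) and minimal at `Q = c P`, where `P / Q = 1/c`; so on `[q', q'']` it is minimal at the
clamp `q* = min(q'', max(c P, q'))` of `c P`. Hence `q* f(p/q*) + ν (q - q*) ≤ q f(p/q)` pointwise,
and integrating with `∫ q = ∫ q* = 1` removes the `ν` term.
-/

namespace ConvexOn

variable {s : Set ℝ} {f : ℝ → ℝ}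

lemma add_rightDeriv_mul_sub_le {x y : ℝ} (hf : ConvexOn ℝ s f) (hx : x ∈ interior s)
    (hy : y ∈ s) : f x + derivWithin f (Ioi x) x * (y - x) ≤ f y := by
  rcases lt_trichotomy x y with hxy | rfl | hyx
  · have h := hf.rightDeriv_le_slope_of_mem_interior hx hy hxy
    rw [slope_def_field, le_div_iff₀ (sub_pos.2 hxy)] at h
    linarith
  · simp
  · have h := (hf.slope_le_leftDeriv_of_mem_interior hy hx hyx).trans
      (hf.leftDeriv_le_rightDeriv_of_mem_interior hx)
    rw [slope_def_field, div_le_iff₀ (sub_pos.2 hyx)] at h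
    linarith

lemma perspective (hf : ConvexOn ℝ (Ici 0) f) {P : ℝ} (hP : 0 ≤ P) :
    ConvexOn ℝ (Ioi 0) (fun Q => Q * f (P / Q)) := by
  refine ⟨convex_Ioi 0, fun Q₁ (hQ₁ : 0 < Q₁) Q₂ (hQ₂ : 0 < Q₂) a b ha hb hab => ?_⟩
  have hQ : 0 < a * Q₁ + b * Q₂ := by
    rcases ha.eq_or_lt with rfl | ha
    · rw [zero_add] at hab; simp [hab, hQ₂]
    · positivity
  have hjensen := hf.2 (mem_Ici.2 (div_nonneg hP hQ₁.le)) (mem_Ici.2 (div_nonneg hP hQ₂.le))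
    (div_nonneg (mul_nonneg ha hQ₁.le) hQ.le) (div_nonneg (mul_nonneg hb hQ₂.le) hQ.le)
    (by rw [← add_div, div_self hQ.ne'])
  have hcomb : (a * Q₁ / (a * Q₁ + b * Q₂)) • (P / Q₁) + (b * Q₂ / (a * Q₁ + b * Q₂)) • (P / Q₂)
      = P / (a * Q₁ + b * Q₂) := by
    simp only [smul_eq_mul]; field_simp; linear_combination P * hab
  rw [hcomb, smul_eq_mul, smul_eq_mul] at hjensen
  simp only [smul_eq_mul]
  calc (a * Q₁ + b * Q₂) * f (P / (a * Q₁ + b * Q₂))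
      ≤ (a * Q₁ + b * Q₂) * (a * Q₁ / (a * Q₁ + b * Q₂) * f (P / Q₁)
        + b * Q₂ / (a * Q₁ + b * Q₂) * f (P / Q₂)) := by gcongr
    _ = a * (Q₁ * f (P / Q₁)) + b * (Q₂ * f (P / Q₂)) := by field_simp

lemma le_of_isMinOn_of_mem_uIcc {m y z : ℝ} (hf : ConvexOn ℝ s f) (hmin : IsMinOn f s m)
    (hm : m ∈ s) (hz : z ∈ s) (hy : y ∈ uIcc m z) : f y ≤ f z := by
  have hys : y ∈ s := hf.1.ordConnected.uIcc_subset hm hz hy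
  rcases le_total m z with hmz | hzm
  · rw [uIcc_of_le hmz] at hy
    rcases hy.1.eq_or_lt with rfl | hmy
    · exact hmin hz
    · exact hf.le_right_of_left_le'' hm hz hmy hy.2 (hmin hys)
  · rw [uIcc_of_ge hzm] at hy
    rcases hy.2.eq_or_lt with rfl | hym
    · exact hmin hz
    · exact hf.le_left_of_right_le'' hz hm hy.1 hym (hmin hys)

end ConvexOn

lemma min_max_mem_uIcc {a b m x : ℝ} (hx : x ∈ Icc a b) : min b (max m a) ∈ uIcc m x := by
  rw [mem_uIcc]
  grind

lemma clamp_mul_comp_div_add_le {f : ℝ → ℝ} (hf : ConvexOn ℝ (Ici 0) f) {c P a b Q A : ℝ}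
    (hc : 0 < c) (hP : 0 ≤ P) (ha : 0 < a) (hQ : Q ∈ Icc a b)
    (hA : A = min b (max (c * P) a)) :
    A * f (P / A) + (f c⁻¹ - derivWithin f (Ioi c⁻¹) c⁻¹ * c⁻¹) * (Q - A)
      ≤ Q * f (P / Q) := by
  set k := derivWithin f (Ioi c⁻¹) c⁻¹
  have hsub : ∀ y, 0 ≤ y → f c⁻¹ + k * (y - c⁻¹) ≤ f y := fun y hy =>
    hf.add_rightDeriv_mul_sub_le (by simpa using hc) hy
  have hQ₀ : 0 < Q := ha.trans_le hQ.1
  set h : ℝ → ℝ := fun Q => Q * f (P / Q) - (f c⁻¹ - k * c⁻¹) * Q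
  suffices h A ≤ h Q by simp only [h] at this; linarith
  rcases hP.eq_or_lt with rfl | hP
  · have hAa : A = a := by rw [hA, mul_zero, max_eq_right ha.le, min_eq_right (hQ.1.trans hQ.2)]
    have := hsub 0 le_rfl
    simp only [h, hAa, zero_div]
    nlinarith [hQ.1]
  · have hconv : ConvexOn ℝ (Ioi 0) h :=
      (hf.perspective hP.le).sub ((LinearMap.mul ℝ ℝ (f c⁻¹ - k * c⁻¹)).concaveOn (convex_Ioi 0))
    have hmin : IsMinOn h (Ioi 0) (c * P) := by
      intro R (hR : 0 < R)
      have hcP : h (c * P) = k * P := by simp only [h]; field_simp; ring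
      calc h (c * P) = R * (f c⁻¹ + k * (P / R - c⁻¹)) - (f c⁻¹ - k * c⁻¹) * R := by
            rw [hcP]; field_simp; ring
        _ ≤ R * f (P / R) - (f c⁻¹ - k * c⁻¹) * R := by
            gcongr; exact hsub _ (by positivity)
    exact hconv.le_of_isMinOn_of_mem_uIcc hmin (mul_pos hc hP) hQ₀ (hA ▸ min_max_mem_uIcc hQ)

theorem band_projection_f_divergence_general {Ω : Type*} [MeasurableSpace Ω]
    (μ : Measure Ω)
    (q' q'' : Ω → ℝ)
    (hband : ∀ᵐ ω ∂μ, 0 < q' ω ∧ q' ω ≤ q'' ω)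
    (p : Ω → ℝ)
    (hpnonneg : ∀ ω, 0 ≤ p ω)
    (c : ℝ) (hc : 0 < c)
    (qstar : Ω → ℝ)
    (hqstar : ∀ ω, qstar ω = min (q'' ω) (max (c * p ω) (q' ω)))
    (hqstarone : ∫ ω, qstar ω ∂μ = 1)
    (f : ℝ → ℝ) (hf : ConvexOn ℝ (Set.Ici 0) f)
    (q : Ω → ℝ)
    (hqint : Integrable q μ) (hqone : ∫ ω, q ω ∂μ = 1)
    (hqband : ∀ᵐ ω ∂μ, q' ω ≤ q ω ∧ q ω ≤ q'' ω)
    (hintq : Integrable (fun ω => q ω * f (p ω / q ω)) μ)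
    (hintqstar : Integrable (fun ω => qstar ω * f (p ω / qstar ω)) μ) :
    ∫ ω, qstar ω * f (p ω / qstar ω) ∂μ ≤ ∫ ω, q ω * f (p ω / q ω) ∂μ := by
  set ν := f c⁻¹ - derivWithin f (Ioi c⁻¹) c⁻¹ * c⁻¹
  have hqstar_int : Integrable qstar μ := .of_integral_ne_zero (by simp [hqstarone])
  have hcorr_int : Integrable (fun ω => ν * (q ω - qstar ω)) μ :=
    (hqint.sub hqstar_int).const_mul ν
  have hcorr : ∫ ω, ν * (q ω - qstar ω) ∂μ = 0 := by
    rw [integral_const_mul, integral_sub hqint hqstar_int, hqone, hqstarone, sub_self, mul_zero]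
  have hpointwise : ∀ᵐ ω ∂μ,
      qstar ω * f (p ω / qstar ω) + ν * (q ω - qstar ω) ≤ q ω * f (p ω / q ω) := by
    filter_upwards [hband, hqband] with ω hω hqω
    exact clamp_mul_comp_div_add_le hf hc (hpnonneg ω) hω.1 hqω (hqstar ω)
  calc ∫ ω, qstar ω * f (p ω / qstar ω) ∂μ
      = ∫ ω, qstar ω * f (p ω / qstar ω) + ν * (q ω - qstar ω) ∂μ := by
        rw [integral_add hintqstar hcorr_int, hcorr, add_zero]
    _ ≤ ∫ ω, q ω * f (p ω / q ω) ∂μ := integral_mono_ae (hintqstar.add hcorr_int) hintq hpointwise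

/-- Corollary 1: the band fixed-point formula `q* = min(q'', max(c·p, q'))` jointly
minimizes all f-divergences `D_f(P‖Q) = ∫ q·f(p/q) dμ` over the density band. -/
theorem band_projection_f_divergence {Ω : Type*} [MeasurableSpace Ω]
    (μ : Measure Ω) [SigmaFinite μ]
    (q' q'' : Ω → ℝ)
    (hm' : Measurable q') (hm'' : Measurable q'')
    (hband : ∀ᵐ ω ∂μ, 0 < q' ω ∧ q' ω ≤ q'' ω)
    (hint' : Integrable q' μ)
    (p : Ω → ℝ)
    (hpm : Measurable p) (hpnonneg : ∀ ω, 0 ≤ p ω)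
    (hpint : Integrable p μ) (hpone : ∫ ω, p ω ∂μ = 1)
    (c : ℝ) (hc : 0 < c)
    (qstar : Ω → ℝ)
    (hqstar : ∀ ω, qstar ω = min (q'' ω) (max (c * p ω) (q' ω)))
    (hqstarone : ∫ ω, qstar ω ∂μ = 1)
    (f : ℝ → ℝ) (hf : ConvexOn ℝ (Set.Ici 0) f)
    (q : Ω → ℝ)
    (hqm : Measurable q) (hqnonneg : ∀ ω, 0 ≤ q ω)
    (hqint : Integrable q μ) (hqone : ∫ ω, q ω ∂μ = 1)
    (hqband : ∀ᵐ ω ∂μ, q' ω ≤ q ω ∧ q ω ≤ q'' ω)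
    (hintq : Integrable (fun ω => q ω * f (p ω / q ω)) μ)
    (hintqstar : Integrable (fun ω => qstar ω * f (p ω / qstar ω)) μ) :
    ∫ ω, qstar ω * f (p ω / qstar ω) ∂μ ≤ ∫ ω, q ω * f (p ω / q ω) ∂μ :=
  band_projection_f_divergence_general μ q' q'' hband p hpnonneg c hc qstar hqstar hqstarone f hf q
    hqint hqone hqband hintq hintqstar
end
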